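/- arXiv:2104.11373 — 5 statements merged into one kernel-verified Lean document; each statement's English description precedes it below -/
import Mathlib

section
/- Let F be a finite field of characteristic 2 and let f = a00·X0^2 + a01·X0·X1 + a02·X0·X2 + a11·X1^2 + a12·X1·X2 + a22·X2^2 be a quadratic form over F. Then f is absolutely irreducible (i.e., the image of f in K[X0,X1,X2], where K is an algebraic closure of F, is irreducible) if and only if a00·a12^2 + a11·a02^2 + a22·a01^2 + a01·a02·a12 ≠ 0. -/
/-!
Over an algebraically closed field a reducible quadratic form is a product of two linear forms,
and in characteristic 2 the expression `Δ = a00·a12² + a11·a02² + a22·a01² + a01·a02·a12`,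
evaluated at the coefficients of such a product, is twice a polynomial in the coefficients of
the factors, hence zero. Conversely, if `Δ = 0` and say `a12 ≠ 0`, factor the binary part
`a11·X1² + a12·X1·X2 + a22·X2² = (x·X1 + y·X2)(z·X1 + w·X2)`; the `X0`-coefficients of the two
factors are then forced to be `(a01·y + a02·x)/a12` and `(a01·w + a02·z)/a12`, and `Δ = 0` is
exactly what makes the coefficient of `X0²` come out right. Since `Δ` is invariant under
permuting the variables, the other cases with an off-diagonal coefficient reduce to this one,
and a diagonal form is the square of `√a00·X0 + √a11·X1 + √a22·X2`.
-/

noncomputable section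

open MvPolynomial

namespace Pencils

/-- The space of ternary polynomials over `F`. -/
abbrev Poly (F : Type*) [Field F] : Type _ := MvPolynomial (Fin 3) F

variable {F : Type*} [Field F]

/-- The coefficient of the monomial `X i * X j` in `f` (for `i = j`, of `X i ^ 2`). -/
def qc (f : Poly F) (i j : Fin 3) : F :=
  MvPolynomial.coeff (Finsupp.single i 1 + Finsupp.single j 1) f

/-- A quadratic form over a field of characteristic 2 is singular iff
`a00·a12² + a11·a02² + a22·a01² + a01·a02·a12 = 0`. -/
def IsSingular (f : Poly F) : Prop :=
  qc f 0 0 * qc f 1 2 ^ 2 + qc f 1 1 * qc f 0 2 ^ 2 + qc f 2 2 * qc f 0 1 ^ 2 +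
    qc f 0 1 * qc f 0 2 * qc f 1 2 = 0

/-- A pencil of conics: a 2-dimensional subspace of the space of
homogeneous quadratic forms in `X 0, X 1, X 2`. -/
def IsPencil (W : Submodule F (Poly F)) : Prop :=
  W ≤ homogeneousSubmodule (Fin 3) F 2 ∧ Module.finrank F ↥W = 2

/-- A member of a pencil `W` is a 1-dimensional subspace of `W`. -/
def IsMember (W L : Submodule F (Poly F)) : Prop :=
  L ≤ W ∧ Module.finrank F ↥L = 1

/-- A double line: all nonzero elements are squares of nonzero linear forms. -/
def IsDoubleLine (L : Submodule F (Poly F)) : Prop :=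
  ∀ f ∈ L, f ≠ 0 → ∃ ℓ : Poly F, ℓ.IsHomogeneous 1 ∧ ℓ ≠ 0 ∧ f = ℓ ^ 2

/-- A real line pair: all nonzero elements are products of two linearly
independent linear forms over `F`. -/
def IsRealPair (L : Submodule F (Poly F)) : Prop :=
  ∀ f ∈ L, f ≠ 0 → ∃ ℓ m : Poly F, ℓ.IsHomogeneous 1 ∧ m.IsHomogeneous 1 ∧
    LinearIndependent F ![ℓ, m] ∧ f = ℓ * m

/-- `f` has a nonzero linear form over `F` as a factor. -/
def HasLinearFactor (f : Poly F) : Prop :=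
  ∃ ℓ : Poly F, ℓ.IsHomogeneous 1 ∧ ℓ ≠ 0 ∧ ℓ ∣ f

/-- An imaginary line pair: all nonzero elements are singular with no linear factor over `F`. -/
def IsImagPair (L : Submodule F (Poly F)) : Prop :=
  ∀ f ∈ L, f ≠ 0 → IsSingular f ∧ ¬ HasLinearFactor f

/-- A nonsingular member: all nonzero elements are nonsingular. -/
def IsNonsingularConic (L : Submodule F (Poly F)) : Prop :=
  ∀ f ∈ L, f ≠ 0 → ¬ IsSingular f

/-- `a1 W`: number of members of `W` that are double lines. -/
def a1 (W : Submodule F (Poly F)) : ℕ :=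
  Nat.card {L : Submodule F (Poly F) // IsMember W L ∧ IsDoubleLine L}

/-- `a2r W`: number of members of `W` that are real line pairs. -/
def a2r (W : Submodule F (Poly F)) : ℕ :=
  Nat.card {L : Submodule F (Poly F) // IsMember W L ∧ IsRealPair L}

/-- `a2i W`: number of members of `W` that are imaginary line pairs. -/
def a2i (W : Submodule F (Poly F)) : ℕ :=
  Nat.card {L : Submodule F (Poly F) // IsMember W L ∧ IsImagPair L}

/-- `a3 W`: number of members of `W` that are nonsingular conics. -/
def a3 (W : Submodule F (Poly F)) : ℕ :=
  Nat.card {L : Submodule F (Poly F) // IsMember W L ∧ IsNonsingularConic L}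

/-- A base point of the pencil `W`: a 1-dimensional subspace of `F³` on which
every element of `W` vanishes. -/
def IsBasePoint (W : Submodule F (Poly F)) (P : Submodule F (Fin 3 → F)) : Prop :=
  Module.finrank F ↥P = 1 ∧ ∀ f ∈ W, ∀ v ∈ P, MvPolynomial.eval v f = 0

/-- `b W`: the number of base points of `W`. -/
def b (W : Submodule F (Poly F)) : ℕ :=
  Nat.card {P : Submodule F (Fin 3 → F) // IsBasePoint W P}

/-- The substitution action of a matrix `g` on quadratic forms: `(g • f)(X) = f(g·X)`. -/
def act (g : Matrix (Fin 3) (Fin 3) F) : Poly F →ₗ[F] Poly F :=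
  (MvPolynomial.aeval (fun i => ∑ j : Fin 3, MvPolynomial.C (g i j) * MvPolynomial.X j) :
    Poly F →ₐ[F] Poly F).toLinearMap

end Pencils

theorem Finsupp.exists_eq_single_of_degree_eq_one {σ : Type*} {d : σ →₀ ℕ}
    (h : d.degree = 1) : ∃ i, d = Finsupp.single i 1 := by
  classical
  obtain ⟨i, hi⟩ := Multiset.card_eq_one.mp
    (by rwa [Finsupp.card_toMultiset] : Multiset.card (Finsupp.toMultiset d) = 1)
  exact ⟨i, by rw [← Multiset.toFinsupp_singleton, eq_comm, Multiset.toFinsupp_eq_iff, hi]⟩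

namespace MvPolynomial

variable {σ R : Type*}

theorem eq_C_add_sum_of_totalDegree_le_one [CommSemiring R] [Fintype σ] {p : MvPolynomial σ R}
    (hp : p.totalDegree ≤ 1) :
    p = C (coeff 0 p) + ∑ i, C (coeff (Finsupp.single i 1) p) * X i := by
  classical
  ext d
  simp only [coeff_add, coeff_C, coeff_sum, coeff_C_mul, coeff_X, mul_ite, mul_one, mul_zero]
  obtain hd | hd | hd : d.degree = 0 ∨ d.degree = 1 ∨ 1 < d.degree := by omega
  · obtain rfl := (Finsupp.degree_eq_zero_iff d).mp hd
    simp
  · obtain ⟨i, rfl⟩ := Finsupp.exists_eq_single_of_degree_eq_one hd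
    simp [Finsupp.single_left_inj, (Finsupp.single_ne_zero.mpr one_ne_zero).symm]
  · have hne : ∀ i, Finsupp.single i 1 ≠ d := fun i h => by simp [← h] at hd
    have h0 : 0 ≠ d := fun h => by simp [← h] at hd
    simp [hne, h0, coeff_eq_zero_of_totalDegree_lt (hp.trans_lt hd)]

theorem totalDegree_C_mul_le [CommSemiring R] (a : R) (p : MvPolynomial σ R) :
    (C a * p).totalDegree ≤ p.totalDegree := by
  rw [C_mul']
  exact totalDegree_smul_le a p

theorem one_le_totalDegree_of_not_isUnit [Field R] {p : MvPolynomial σ R} (hp0 : p ≠ 0)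
    (hp : ¬IsUnit p) : 1 ≤ p.totalDegree := by
  by_contra! h
  rw [Nat.lt_one_iff, totalDegree_eq_zero_iff_eq_C] at h
  exact hp (h ▸ (isUnit_iff_ne_zero.mpr fun h0 => hp0 (by rw [h, h0, C_0])).map C)

end MvPolynomial

namespace Pencils

variable {K : Type*} [Field K]

def ternaryQuadForm (a00 a01 a02 a11 a12 a22 : K) : Poly K :=
  C a00 * X 0 ^ 2 + C a01 * X 0 * X 1 + C a02 * X 0 * X 2 +
    C a11 * X 1 ^ 2 + C a12 * X 1 * X 2 + C a22 * X 2 ^ 2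

def linearForm (b : Fin 3 → K) : Poly K :=
  ∑ i, C (b i) * X i

theorem map_ternaryQuadForm {L : Type*} [Field L] (φ : K →+* L) (a00 a01 a02 a11 a12 a22 : K) :
    map φ (ternaryQuadForm a00 a01 a02 a11 a12 a22) =
      ternaryQuadForm (φ a00) (φ a01) (φ a02) (φ a11) (φ a12) (φ a22) := by
  simp [ternaryQuadForm]

theorem isHomogeneous_ternaryQuadForm (a00 a01 a02 a11 a12 a22 : K) :
    (ternaryQuadForm a00 a01 a02 a11 a12 a22).IsHomogeneous 2 := by
  have hmul (a : K) (i j : Fin 3) : (C a * X i * X j : Poly K).IsHomogeneous 2 :=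
    (isHomogeneous_C_mul_X a i).mul (isHomogeneous_X K j)
  exact (((((isHomogeneous_C_mul_X_pow a00 0 2).add (hmul a01 0 1)).add (hmul a02 0 2)).add
    (isHomogeneous_C_mul_X_pow a11 1 2)).add (hmul a12 1 2)).add
    (isHomogeneous_C_mul_X_pow a22 2 2)

theorem isSingular_ternaryQuadForm_iff (a00 a01 a02 a11 a12 a22 : K) :
    IsSingular (ternaryQuadForm a00 a01 a02 a11 a12 a22) ↔
      a00 * a12 ^ 2 + a11 * a02 ^ 2 + a22 * a01 ^ 2 + a01 * a02 * a12 = 0 := by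
  simp [IsSingular, qc, ternaryQuadForm, X, monomial_mul, monomial_pow, C_mul_monomial,
    coeff_monomial, Finsupp.ext_iff, Fin.forall_fin_succ, Finsupp.single_apply]

theorem linearForm_mul_linearForm (b c : Fin 3 → K) :
    linearForm b * linearForm c = ternaryQuadForm (b 0 * c 0) (b 0 * c 1 + b 1 * c 0)
      (b 0 * c 2 + b 2 * c 0) (b 1 * c 1) (b 1 * c 2 + b 2 * c 1) (b 2 * c 2) := by
  simp only [linearForm, ternaryQuadForm, Fin.sum_univ_three, map_add, map_mul]
  ring

theorem linearForm_comp (b : Fin 3 → K) (e : Equiv.Perm (Fin 3)) :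
    linearForm (b ∘ e) = rename e.symm (linearForm b) := by
  simp only [linearForm, map_sum, map_mul, rename_C, rename_X]
  exact Fintype.sum_equiv e _ _ (by simp)

theorem totalDegree_linearForm_le (b : Fin 3 → K) : (linearForm b).totalDegree ≤ 1 :=
  (IsHomogeneous.sum _ _ 1 fun i _ => isHomogeneous_C_mul_X (b i) i).totalDegree_le

theorem not_isUnit_linearForm (b : Fin 3 → K) : ¬IsUnit (linearForm b) := fun h => by
  simpa [linearForm] using h.map constantCoeff

theorem exists_eq_C_add_linearForm {p : Poly K} (hp : p.totalDegree ≤ 1) :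
    ∃ p₀ b, p = C p₀ + linearForm b :=
  ⟨_, _, eq_C_add_sum_of_totalDegree_le_one hp⟩

theorem qc_eq_zero_of_totalDegree_le_one {f : Poly K} (hf : f.totalDegree ≤ 1) (i j : Fin 3) :
    qc f i j = 0 :=
  coeff_eq_zero_of_totalDegree_lt <| hf.trans_lt <| by
    rw [← Finsupp.degree_apply, map_add, Finsupp.degree_single, Finsupp.degree_single]; omega

theorem qc_add_of_totalDegree_le_one {g : Poly K} (hg : g.totalDegree ≤ 1) (f : Poly K)
    (i j : Fin 3) : qc (g + f) i j = qc f i j := by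
  rw [qc, coeff_add, ← qc, ← qc, qc_eq_zero_of_totalDegree_le_one hg, zero_add]

theorem isSingular_of_totalDegree_le_one {f : Poly K} (hf : f.totalDegree ≤ 1) :
    IsSingular f := by
  simp [IsSingular, qc_eq_zero_of_totalDegree_le_one hf]

theorem isSingular_linearForm_mul_linearForm [CharP K 2] (b c : Fin 3 → K) :
    IsSingular (linearForm b * linearForm c) := by
  rw [linearForm_mul_linearForm, isSingular_ternaryQuadForm_iff]
  linear_combination (b 0 * b 1 ^ 2 * c 0 * c 2 ^ 2 + b 0 * b 2 ^ 2 * c 0 * c 1 ^ 2 +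
    b 0 ^ 2 * b 1 * c 1 * c 2 ^ 2 + b 1 * b 2 ^ 2 * c 0 ^ 2 * c 1 +
    b 0 ^ 2 * b 2 * c 1 ^ 2 * c 2 + b 1 ^ 2 * b 2 * c 0 ^ 2 * c 2 +
    4 * b 0 * b 1 * b 2 * c 0 * c 1 * c 2) * CharTwo.two_eq_zero (R := K)

theorem isSingular_mul_of_totalDegree_le_one [CharP K 2] {p q : Poly K} (hp : p.totalDegree ≤ 1)
    (hq : q.totalDegree ≤ 1) : IsSingular (p * q) := by
  obtain ⟨p₀, b, rfl⟩ := exists_eq_C_add_linearForm hp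
  obtain ⟨q₀, c, rfl⟩ := exists_eq_C_add_linearForm hq
  have hlow : (C p₀ * (C q₀ + linearForm c) + C q₀ * linearForm b).totalDegree ≤ 1 :=
    (totalDegree_add _ _).trans <| max_le ((totalDegree_C_mul_le _ _).trans hq)
      ((totalDegree_C_mul_le _ _).trans (totalDegree_linearForm_le b))
  have hpq : (C p₀ + linearForm b) * (C q₀ + linearForm c) =
      (C p₀ * (C q₀ + linearForm c) + C q₀ * linearForm b) + linearForm b * linearForm c := by
    ring
  simpa only [IsSingular, hpq, qc_add_of_totalDegree_le_one hlow] using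
    isSingular_linearForm_mul_linearForm b c

theorem isSingular_of_not_irreducible [CharP K 2] {f : Poly K} (hf : f.totalDegree ≤ 2)
    (h : ¬Irreducible f) : IsSingular f := by
  by_cases hf1 : f.totalDegree ≤ 1
  · exact isSingular_of_totalDegree_le_one hf1
  have hf0 : f ≠ 0 := by rintro rfl; simp at hf1
  obtain hu | ⟨p, q, rfl, hp, hq⟩ :
      IsUnit f ∨ ∃ p q, f = p * q ∧ ¬IsUnit p ∧ ¬IsUnit q := by
    simpa [irreducible_iff, or_iff_not_imp_left] using h
  · exact absurd ((isUnit_iff_totalDegree_of_isReduced.mp hu).2 ▸ zero_le_one) hf1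
  have hdeg := totalDegree_mul_of_isDomain (left_ne_zero_of_mul hf0) (right_ne_zero_of_mul hf0)
  have := one_le_totalDegree_of_not_isUnit (left_ne_zero_of_mul hf0) hp
  have := one_le_totalDegree_of_not_isUnit (right_ne_zero_of_mul hf0) hq
  exact isSingular_mul_of_totalDegree_le_one (by omega) (by omega)

theorem exists_binary_quadratic_factorization [IsAlgClosed K] (a b c : K) :
    ∃ x y z w : K, x * z = a ∧ x * w + y * z = b ∧ y * w = c := by
  by_cases ha : a = 0
  · exact ⟨0, 1, b, c, by simp [ha], by ring, by ring⟩
  obtain ⟨t, ht⟩ := IsAlgClosed.exists_root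
    (Polynomial.C a * Polynomial.X ^ 2 + Polynomial.C b * Polynomial.X + Polynomial.C c)
    (by rw [Polynomial.degree_quadratic ha]; simp)
  have ht' : a * t ^ 2 + b * t + c = 0 := by simpa using ht
  exact ⟨1, -t, a, b + a * t, by ring, by ring, by linear_combination -ht'⟩

theorem exists_linearForm_mul_of_coeff12_ne_zero [IsAlgClosed K] [CharP K 2]
    {a00 a01 a02 a11 a12 a22 : K}
    (hΔ : a00 * a12 ^ 2 + a11 * a02 ^ 2 + a22 * a01 ^ 2 + a01 * a02 * a12 = 0) (h12 : a12 ≠ 0) :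
    ∃ b c, ternaryQuadForm a00 a01 a02 a11 a12 a22 = linearForm b * linearForm c := by
  obtain ⟨x, y, z, w, hxz, hxw, hyw⟩ := exists_binary_quadratic_factorization a11 a12 a22
  have h2 := CharTwo.two_eq_zero (R := K)
  refine ⟨![(a01 * y + a02 * x) / a12, x, y], ![(a01 * w + a02 * z) / a12, z, w], ?_⟩
  rw [linearForm_mul_linearForm]
  congr 1 <;> simp <;> field_simp
  · linear_combination hΔ - a01 ^ 2 * hyw - a01 * a02 * hxw - a02 ^ 2 * hxz -
      (a02 ^ 2 * a11 + a01 ^ 2 * a22 + a01 * a02 * a12) * h2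
  · linear_combination -a01 * hxw - a02 * x * z * h2
  · linear_combination -a02 * hxw - a01 * y * w * h2
  exacts [hxz.symm, hxw.symm, hyw.symm]

theorem exists_linearForm_mul [IsAlgClosed K] [CharP K 2] {a00 a01 a02 a11 a12 a22 : K}
    (hΔ : a00 * a12 ^ 2 + a11 * a02 ^ 2 + a22 * a01 ^ 2 + a01 * a02 * a12 = 0) :
    ∃ b c, ternaryQuadForm a00 a01 a02 a11 a12 a22 = linearForm b * linearForm c := by
  obtain h12 | h12 := ne_or_eq a12 0
  · exact exists_linearForm_mul_of_coeff12_ne_zero hΔ h12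
  obtain h01 | h01 := ne_or_eq a01 0
  · obtain ⟨b, c, h⟩ := exists_linearForm_mul_of_coeff12_ne_zero (a00 := a22) (a01 := a12)
      (a02 := a02) (a11 := a11) (a12 := a01) (a22 := a00) (by linear_combination hΔ) h01
    refine ⟨b ∘ Equiv.swap 0 2, c ∘ Equiv.swap 0 2, ?_⟩
    rw [linearForm_comp, linearForm_comp, ← map_mul, ← h]
    simp [ternaryQuadForm, Equiv.swap_apply_of_ne_of_ne]
    ring
  obtain h02 | h02 := ne_or_eq a02 0
  · obtain ⟨b, c, h⟩ := exists_linearForm_mul_of_coeff12_ne_zero (a00 := a11) (a01 := a01)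
      (a02 := a12) (a11 := a00) (a12 := a02) (a22 := a22) (by linear_combination hΔ) h02
    refine ⟨b ∘ Equiv.swap 0 1, c ∘ Equiv.swap 0 1, ?_⟩
    rw [linearForm_comp, linearForm_comp, ← map_mul, ← h]
    simp [ternaryQuadForm, Equiv.swap_apply_of_ne_of_ne]
    ring
  choose s hs using fun a : K => IsAlgClosed.exists_pow_nat_eq a two_pos
  have h2 := CharTwo.two_eq_zero (R := K)
  refine ⟨![s a00, s a11, s a22], ![s a00, s a11, s a22], ?_⟩
  rw [linearForm_mul_linearForm]
  congr 1 <;> simp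
  · linear_combination -hs a00
  · linear_combination h01 - s a00 * s a11 * h2
  · linear_combination h02 - s a00 * s a22 * h2
  · linear_combination -hs a11
  · linear_combination h12 - s a11 * s a22 * h2
  · linear_combination -hs a22

theorem irreducible_ternaryQuadForm_iff [IsAlgClosed K] [CharP K 2]
    (a00 a01 a02 a11 a12 a22 : K) :
    Irreducible (ternaryQuadForm a00 a01 a02 a11 a12 a22) ↔
      a00 * a12 ^ 2 + a11 * a02 ^ 2 + a22 * a01 ^ 2 + a01 * a02 * a12 ≠ 0 := by
  refine ⟨fun hirr hΔ => ?_, fun hΔ => by_contra fun hred => hΔ ?_⟩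
  · obtain ⟨b, c, h⟩ := exists_linearForm_mul hΔ
    exact (hirr.isUnit_or_isUnit h).elim (not_isUnit_linearForm b) (not_isUnit_linearForm c)
  · exact (isSingular_ternaryQuadForm_iff ..).mp <|
      isSingular_of_not_irreducible (isHomogeneous_ternaryQuadForm ..).totalDegree_le hred

theorem absolutely_irreducible_iff_general (F : Type*) [Field F] [CharP F 2]
    (a00 a01 a02 a11 a12 a22 : F) :
    Irreducible (MvPolynomial.map (algebraMap F (AlgebraicClosure F))
        (C a00 * X 0 ^ 2 + C a01 * X 0 * X 1 + C a02 * X 0 * X 2 +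
          C a11 * X 1 ^ 2 + C a12 * X 1 * X 2 + C a22 * X 2 ^ 2 : Poly F)) ↔
      a00 * a12 ^ 2 + a11 * a02 ^ 2 + a22 * a01 ^ 2 + a01 * a02 * a12 ≠ 0 := by
  change Irreducible (map _ (ternaryQuadForm a00 a01 a02 a11 a12 a22)) ↔ _
  rw [map_ternaryQuadForm, irreducible_ternaryQuadForm_iff,
    ← map_ne_zero (algebraMap F (AlgebraicClosure F))]
  simp only [map_add, map_mul, map_pow]

/-- a quadratic form over a finite field `F` of characteristic 2 is
absolutely irreducible (irreducible over an algebraic closure of `F`) iff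
`a00·a12² + a11·a02² + a22·a01² + a01·a02·a12 ≠ 0`. -/
theorem absolutely_irreducible_iff (F : Type*) [Field F] [Fintype F] [CharP F 2]
    (a00 a01 a02 a11 a12 a22 : F) :
    Irreducible (MvPolynomial.map (algebraMap F (AlgebraicClosure F))
        (C a00 * X 0 ^ 2 + C a01 * X 0 * X 1 + C a02 * X 0 * X 2 +
          C a11 * X 1 ^ 2 + C a12 * X 1 * X 2 + C a22 * X 2 ^ 2 : Poly F)) ↔
      a00 * a12 ^ 2 + a11 * a02 ^ 2 + a22 * a01 ^ 2 + a01 * a02 * a12 ≠ 0 :=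
  absolutely_irreducible_iff_general F a00 a01 a02 a11 a12 a22

end Pencils
end
end

section
/- Let F be a finite field of characteristic 2 with q = |F| > 2, and let W be a pencil of conics over F with a1(W) = 1, a2r(W) = 0 and a2i(W) > 0. Then a3(W) > 0, i.e., W contains a nonsingular conic. -/
noncomputable section

open MvPolynomial

namespace Pencils

variable {F : Type*} [Field F]

/-!
Let `ℓ²` be the double line and `g` an imaginary line pair of the pencil, and let `v` be the
nucleus of `g`, its singular point. Adding `ℓ² = ∑ cᵢ² Xᵢ²` only changes the diagonal
coefficients, in which the discriminant is linear, so `disc (g + ℓ²) = disc g + ∑ cᵢ² vᵢ² = ℓ(v)²`.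
If `ℓ(v) ≠ 0`, the member `g + ℓ²` is nonsingular. Otherwise every member `s g + t ℓ²` is singular
at `v`; the one through a coordinate point `eᵢ` with `ℓ(eᵢ) ≠ 0` contains the line through `v` and
`eᵢ` and splits into two distinct lines over `F`, which `a2r W = 0` forbids. Here `v ≠ 0`: a form
with `v = 0` is diagonal, hence the square of a linear form, since every element of `F` is a square.
-/

lemma finsupp_fin_three_ext_iff {d e : Fin 3 →₀ ℕ} :
    d = e ↔ d 0 = e 0 ∧ d 1 = e 1 ∧ d 2 = e 2 := by
  simp [Finsupp.ext_iff, Fin.forall_fin_succ]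

lemma qc_comm (f : Poly F) (i j : Fin 3) : qc f i j = qc f j i := by
  rw [qc, qc, add_comm]

@[simp] lemma qc_add (f g : Poly F) (i j : Fin 3) : qc (f + g) i j = qc f i j + qc g i j :=
  coeff_add _ _ _

@[simp] lemma qc_smul (a : F) (f : Poly F) (i j : Fin 3) : qc (a • f) i j = a * qc f i j := by
  simp [qc]

lemma qc_X_mul_X (i j k l : Fin 3) : qc (X i * X j : Poly F) k l =
    if Finsupp.single i 1 + Finsupp.single j 1 = Finsupp.single k 1 + Finsupp.single l 1
    then 1 else 0 := by
  rw [qc, X, X, monomial_mul, coeff_monomial, one_mul]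

open scoped Pointwise in
lemma eq_qc_expansion {f : Poly F} (hf : f.IsHomogeneous 2) :
    f = C (qc f 0 0) * X 0 ^ 2 + C (qc f 1 1) * X 1 ^ 2 + C (qc f 2 2) * X 2 ^ 2 +
      C (qc f 0 1) * X 0 * X 1 + C (qc f 0 2) * X 0 * X 2 + C (qc f 1 2) * X 1 * X 2 := by
  replace hf : f ∈ Submodule.span F (Set.range (X : Fin 3 → Poly F) * Set.range X) := by
    rwa [← Submodule.span_mul_span, ← homogeneousSubmodule_one_eq_span_X, ← pow_two,
      homogeneousSubmodule_one_pow]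
  induction hf using Submodule.span_induction with
  | mem x hx =>
    obtain ⟨_, ⟨i, rfl⟩, _, ⟨j, rfl⟩, rfl⟩ := hx
    fin_cases i <;> fin_cases j <;> simp [qc_X_mul_X, finsupp_fin_three_ext_iff] <;> ring
  | zero => simp [qc]
  | add x y _ _ hx hy =>
    conv_lhs => rw [hx, hy]
    simp only [qc_add, map_add]
    ring
  | smul a x _ hx =>
    conv_lhs => rw [hx]
    simp only [qc_smul, map_mul]
    rw [smul_eq_C_mul]
    ring

def linForm (c : Fin 3 → F) : Poly F := ∑ i, C (c i) * X i

lemma exists_eq_linForm {ℓ : Poly F} (hℓ : ℓ.IsHomogeneous 1) : ∃ c, ℓ = linForm c := by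
  have hℓ' : ℓ ∈ homogeneousSubmodule (Fin 3) F 1 := hℓ
  rw [homogeneousSubmodule_one_eq_span_X, Submodule.mem_span_range_iff_exists_fun] at hℓ'
  obtain ⟨c, rfl⟩ := hℓ'
  exact ⟨c, by simp [linForm, smul_eq_C_mul]⟩

lemma isHomogeneous_linForm (c : Fin 3 → F) : (linForm c).IsHomogeneous 1 :=
  IsHomogeneous.sum _ _ _ fun i _ => isHomogeneous_C_mul_X (c i) i

@[simp] lemma linForm_zero : linForm (0 : Fin 3 → F) = 0 := by simp [linForm]

lemma linForm_sq [CharP F 2] (c : Fin 3 → F) : linForm c ^ 2 = ∑ i, C (c i ^ 2) * X i ^ 2 := by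
  simp [linForm, sum_pow_char, mul_pow]

lemma qc_linForm_sq [CharP F 2] (c : Fin 3 → F) (i j : Fin 3) :
    qc (linForm c ^ 2) i j = if i = j then c i ^ 2 else 0 := by
  simp only [linForm_sq, qc, Fin.sum_univ_three, coeff_add, coeff_C_mul, coeff_X_pow]
  fin_cases i <;> fin_cases j <;> simp [finsupp_fin_three_ext_iff]

def disc (f : Poly F) : F :=
  qc f 0 0 * qc f 1 2 ^ 2 + qc f 1 1 * qc f 0 2 ^ 2 + qc f 2 2 * qc f 0 1 ^ 2 +
    qc f 0 1 * qc f 0 2 * qc f 1 2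

lemma isSingular_iff_disc_eq_zero {f : Poly F} : IsSingular f ↔ disc f = 0 := Iff.rfl

/-- In characteristic 2 all tangent lines of the conic `f` pass through this point, the kernel of
its alternating polar form; for a singular conic it is the singular point. -/
def nucleus (f : Poly F) : Fin 3 → F := ![qc f 1 2, qc f 0 2, qc f 0 1]

lemma disc_smul (a : F) (f : Poly F) : disc (a • f) = a ^ 3 * disc f := by
  simp only [disc, qc_smul]
  ring

lemma disc_smul_add_smul_linForm_sq [CharP F 2] (g : Poly F) (c : Fin 3 → F) (s t : F) :
    disc (s • g + t • linForm c ^ 2) = s ^ 3 * disc g + s ^ 2 * t * (c ⬝ᵥ nucleus g) ^ 2 := by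
  simp only [disc, nucleus, qc_add, qc_smul, qc_linForm_sq, dotProduct, Fin.sum_univ_three,
    Matrix.cons_val_zero, Matrix.cons_val_one, Matrix.cons_val]
  grind

lemma coeff_single_pderiv (f : Poly F) {i k : Fin 3} (hki : k ≠ i) :
    coeff (Finsupp.single k 1) (pderiv i f) = qc f i k := by
  rw [coeff_pderiv, Finsupp.single_apply, if_neg hki, Nat.cast_zero, zero_add, mul_one, qc,
    add_comm]

lemma coeff_single_self_pderiv (f : Poly F) (i : Fin 3) :
    coeff (Finsupp.single i 1) (pderiv i f) = 2 * qc f i i := by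
  rw [coeff_pderiv, Finsupp.single_eq_same, qc, mul_comm]
  norm_num

lemma linearIndependent_pair_of_coeff {σ : Type*} {u v : MvPolynomial σ F} {d e : σ →₀ ℕ}
    (hud : coeff d u = 0) (hvd : coeff d v ≠ 0) (hue : coeff e u ≠ 0) :
    LinearIndependent F ![u, v] := by
  rw [LinearIndependent.pair_iff]
  intro s t hst
  have ht : t = 0 := by
    simpa [hud, hvd] using congrArg (coeff d) hst
  subst ht
  simpa [hue] using congrArg (coeff e) hst

/-- In characteristic 2, `pderiv i H` is the polar line of `eᵢ`, which joins `eᵢ` to the singular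
point of `H`; when `H (eᵢ) = qc H i i = 0`, the conic contains that line. -/
lemma C_qc_sq_mul_eq_pderiv_mul [CharP F 2] {H : Poly F} (hH : H.IsHomogeneous 2)
    (hs : IsSingular H) {i j : Fin 3} (hij : i ≠ j) (hii : qc H i i = 0) :
    C (qc H i j ^ 2) * H =
      pderiv i H * (C (qc H j j) * pderiv i H + C (qc H i j) * pderiv j H) := by
  have hC := congrArg (C : F → Poly F) hs
  have hexp := eq_qc_expansion hH
  simp only [map_add, map_mul, map_pow, map_zero] at hC
  have hk (k : Fin 3) : k = 0 ∨ k = 1 ∨ k = 2 := by omega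
  obtain rfl | rfl | rfl := hk i <;> obtain rfl | rfl | rfl := hk j <;>
    simp only [qc_comm H 1 0, qc_comm H 2 0, qc_comm H 2 1, ne_eq, not_true_eq_false] at hij hii ⊢
  all_goals
    generalize qc H 0 0 = b00, qc H 1 1 = b11, qc H 2 2 = b22, qc H 0 1 = b01, qc H 0 2 = b02,
      qc H 1 2 = b12 at *
    subst hexp hii
    simp only [map_add, Derivation.leibniz, Derivation.leibniz_pow, derivation_C, pderiv_X,
      Pi.single_apply, smul_eq_mul, nsmul_eq_mul]
    grind

def IsRealLinePair (f : Poly F) : Prop :=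
  ∃ ℓ m : Poly F, ℓ.IsHomogeneous 1 ∧ m.IsHomogeneous 1 ∧ LinearIndependent F ![ℓ, m] ∧
    f = ℓ * m

lemma IsRealLinePair.ne_zero {f : Poly F} (h : IsRealLinePair f) : f ≠ 0 := by
  obtain ⟨ℓ, m, -, -, hind, rfl⟩ := h
  exact mul_ne_zero (hind.ne_zero 0) (hind.ne_zero 1)

lemma IsRealLinePair.smul {f : Poly F} (h : IsRealLinePair f) {a : F} (ha : a ≠ 0) :
    IsRealLinePair (a • f) := by
  obtain ⟨ℓ, m, hℓ, hm, hind, rfl⟩ := h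
  refine ⟨a • ℓ, m, ?_, hm, ?_, by rw [smul_mul_assoc]⟩
  · rw [smul_eq_C_mul]; exact hℓ.C_mul a
  · rw [LinearIndependent.pair_iff] at hind ⊢
    intro s t hst
    have := hind (s * a) t (by rw [mul_smul]; exact hst)
    exact ⟨(mul_eq_zero.mp this.1).resolve_right ha, this.2⟩

lemma isRealLinePair_of_qc_self_eq_zero [CharP F 2] {H : Poly F} (hH : H.IsHomogeneous 2)
    (hs : IsSingular H) {i j : Fin 3} (hij : i ≠ j) (hii : qc H i i = 0) (hHij : qc H i j ≠ 0) :
    IsRealLinePair H := by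
  have hm : (pderiv i H).IsHomogeneous 1 := hH.pderiv
  have hn : (C (qc H j j) * pderiv i H + C (qc H i j) * pderiv j H).IsHomogeneous 1 :=
    (hm.C_mul _).add ((hH.pderiv).C_mul _)
  refine ⟨C (qc H i j ^ 2)⁻¹ * pderiv i H, _, hm.C_mul _, hn, ?_, ?_⟩
  · apply linearIndependent_pair_of_coeff (d := Finsupp.single i 1) (e := Finsupp.single j 1)
    · rw [coeff_C_mul, coeff_single_self_pderiv, hii, mul_zero, mul_zero]
    · simp [coeff_single_self_pderiv, coeff_single_pderiv _ hij, hii, hHij, qc_comm H j i]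
    · rw [coeff_C_mul, coeff_single_pderiv _ hij.symm]
      exact mul_ne_zero (by simpa using hHij) hHij
  · rw [mul_assoc, ← C_qc_sq_mul_eq_pderiv_mul hH hs hij hii, ← mul_assoc, ← C_mul,
      inv_mul_cancel₀ (pow_ne_zero 2 hHij), C_1, one_mul]

lemma hasLinearFactor_of_nucleus_eq_zero [Finite F] [CharP F 2] {g : Poly F}
    (hg : g.IsHomogeneous 2) (hv : nucleus g = 0) : HasLinearFactor g := by
  have hsq (i : Fin 3) : ∃ r, qc g i i = r ^ 2 := by
    obtain ⟨r, hr⟩ := FiniteField.isSquare_of_char_two (ringChar.eq F 2) (qc g i i)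
    exact ⟨r, by rw [hr, sq]⟩
  choose r hr using hsq
  have hg' : g = linForm r ^ 2 := by
    have h12 : qc g 1 2 = 0 := congrFun hv 0
    have h02 : qc g 0 2 = 0 := congrFun hv 1
    have h01 : qc g 0 1 = 0 := congrFun hv 2
    rw [eq_qc_expansion hg, linForm_sq, Fin.sum_univ_three, hr, hr, hr, h01, h02, h12]
    simp
  by_cases hr0 : linForm r = 0
  · exact ⟨X 0, isHomogeneous_X F 0, X_ne_zero 0, by simp [hg', hr0]⟩
  · exact ⟨linForm r, isHomogeneous_linForm r, hr0, hg' ▸ dvd_pow_self _ two_ne_zero⟩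

lemma exists_ne_qc_ne_zero_of_dotProduct_nucleus_eq_zero {g : Poly F} {c : Fin 3 → F}
    (hc : c ≠ 0) (hv : nucleus g ≠ 0) (hcv : c ⬝ᵥ nucleus g = 0) :
    ∃ i j, i ≠ j ∧ c i ≠ 0 ∧ qc g i j ≠ 0 := by
  by_contra! h
  obtain ⟨k, hk⟩ := Function.ne_iff.mp hc
  apply hv
  simp only [nucleus, dotProduct, Fin.sum_univ_three] at hcv ⊢
  have hji (i j : Fin 3) (hij : i ≠ j) (hi : c i ≠ 0) : qc g j i = 0 :=
    qc_comm g j i ▸ h i j hij hi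
  fin_cases k <;> simp_all

lemma exists_ne_zero_of_isMember {W L : Submodule F (Poly F)} (h : IsMember W L) :
    ∃ f ∈ L, f ≠ 0 :=
  Submodule.exists_mem_ne_zero_of_ne_bot fun hL => by subst hL; simpa using h.2

lemma isMember_span_singleton {W : Submodule F (Poly F)} {f : Poly F} (hf : f ∈ W)
    (hf0 : f ≠ 0) : IsMember W (Submodule.span F {f}) :=
  ⟨(Submodule.span_singleton_le_iff_mem f W).mpr hf, finrank_span_singleton hf0⟩

lemma finite_members [Finite F] {W : Submodule F (Poly F)} [FiniteDimensional F W]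
    (p : Submodule F (Poly F) → Prop) : Finite {L // IsMember W L ∧ p L} := by
  have : Finite W := Module.finite_of_finite F
  refine Finite.of_injective (fun L => {x : W | (x : Poly F) ∈ L.1}) ?_
  intro ⟨L₁, h₁, _⟩ ⟨L₂, h₂, _⟩ h
  have key (f : Poly F) (hf : f ∈ W) : f ∈ L₁ ↔ f ∈ L₂ := Set.ext_iff.mp h ⟨f, hf⟩
  exact Subtype.ext <| le_antisymm (fun f hf => (key f (h₁.1 hf)).mp hf)
    (fun f hf => (key f (h₂.1 hf)).mpr hf)

lemma card_members_pos [Finite F] {W : Submodule F (Poly F)} [FiniteDimensional F W]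
    {p : Submodule F (Poly F) → Prop} {f : Poly F} (hf : f ∈ W) (hf0 : f ≠ 0)
    (hp : p (Submodule.span F {f})) : 0 < Nat.card {L // IsMember W L ∧ p L} :=
  have := finite_members (W := W) p
  Nat.card_pos_iff.mpr ⟨⟨⟨_, isMember_span_singleton hf hf0, hp⟩⟩, this⟩

lemma isRealPair_span_singleton {f : Poly F} (hf : IsRealLinePair f) :
    IsRealPair (Submodule.span F {f}) := by
  rintro _ h h0
  obtain ⟨a, rfl⟩ := Submodule.mem_span_singleton.mp h
  exact hf.smul (by rintro rfl; simp at h0)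

lemma isNonsingularConic_span_singleton {f : Poly F} (hf : disc f ≠ 0) :
    IsNonsingularConic (Submodule.span F {f}) := by
  rintro _ h h0
  obtain ⟨a, rfl⟩ := Submodule.mem_span_singleton.mp h
  have ha : a ≠ 0 := by rintro rfl; simp at h0
  exact mul_ne_zero (pow_ne_zero 3 ha) hf ∘ (disc_smul a f).symm.trans

lemma exists_isRealLinePair_of_dotProduct_nucleus_eq_zero [Finite F] [CharP F 2] {g : Poly F}
    (hg : g.IsHomogeneous 2) (hgs : IsSingular g) (hgl : ¬ HasLinearFactor g) {c : Fin 3 → F}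
    (hc : c ≠ 0) (hcv : c ⬝ᵥ nucleus g = 0) :
    ∃ s t : F, IsRealLinePair (s • g + t • linForm c ^ 2) := by
  have hv : nucleus g ≠ 0 := fun hv => hgl (hasLinearFactor_of_nucleus_eq_zero hg hv)
  obtain ⟨i, j, hij, hci, hgij⟩ := exists_ne_qc_ne_zero_of_dotProduct_nucleus_eq_zero hc hv hcv
  -- this member passes through `eᵢ`, and it is singular because `ℓ(v) = 0`
  refine ⟨c i ^ 2, qc g i i, isRealLinePair_of_qc_self_eq_zero ?_ ?_ hij ?_ ?_⟩
  · rw [smul_eq_C_mul, smul_eq_C_mul]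
    exact (hg.C_mul _).add (((isHomogeneous_linForm c).pow 2).C_mul _)
  · rw [isSingular_iff_disc_eq_zero, disc_smul_add_smul_linForm_sq,
      isSingular_iff_disc_eq_zero.mp hgs, hcv]
    ring
  · rw [qc_add, qc_smul, qc_smul, qc_linForm_sq, if_pos rfl, mul_comm,
      CharTwo.add_self_eq_zero]
  · simp [qc_linForm_sq, hij, hci, hgij]

theorem nonsingular_member_exists_general (F : Type*) [Field F] [Fintype F] [CharP F 2]
    (W : Submodule F (Poly F)) (hW : IsPencil W)
    (h1 : a1 W = 1) (h2r : a2r W = 0) (h2i : 0 < a2i W) :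
    0 < a3 W := by
  have : FiniteDimensional F W := .of_finrank_eq_succ hW.2
  obtain ⟨⟨L, hLW, hL⟩, -⟩ := Nat.card_eq_one_iff_exists.mp h1
  obtain ⟨f, hfL, hf0⟩ := exists_ne_zero_of_isMember hLW
  obtain ⟨ℓ, hℓ, hℓ0, rfl⟩ := hL f hfL hf0
  obtain ⟨c, rfl⟩ := exists_eq_linForm hℓ
  obtain ⟨⟨M, hMW, hM⟩⟩ := (Nat.card_pos_iff.mp h2i).1
  obtain ⟨g, hgM, hg0⟩ := exists_ne_zero_of_isMember hMW
  obtain ⟨hgs, hgl⟩ := hM g hgM hg0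
  have mem (s t : F) : s • g + t • linForm c ^ 2 ∈ W :=
    W.add_mem (W.smul_mem s (hMW.1 hgM)) (W.smul_mem t (hLW.1 hfL))
  by_cases hcv : c ⬝ᵥ nucleus g = 0
  · have hc : c ≠ 0 := by rintro rfl; simp at hℓ0
    obtain ⟨s, t, hst⟩ :=
      exists_isRealLinePair_of_dotProduct_nucleus_eq_zero (hW.1 (hMW.1 hgM)) hgs hgl hc hcv
    exact absurd h2r (card_members_pos (mem s t) hst.ne_zero (isRealPair_span_singleton hst)).ne'
  · have hdisc : disc ((1 : F) • g + (1 : F) • linForm c ^ 2) ≠ 0 := by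
      rw [disc_smul_add_smul_linForm_sq, isSingular_iff_disc_eq_zero.mp hgs]
      simpa using hcv
    exact card_members_pos (mem 1 1) (fun h => hdisc (by rw [h]; simp [disc, qc]))
      (isNonsingularConic_span_singleton hdisc)

/-- a pencil with `a1 = 1`, `a2r = 0` and `a2i > 0` over a finite field of
characteristic 2 with `q > 2` contains a nonsingular conic, i.e. `a3 > 0`. -/
theorem nonsingular_member_exists (F : Type*) [Field F] [Fintype F] [CharP F 2]
    (hq : 2 < Fintype.card F) (W : Submodule F (Poly F)) (hW : IsPencil W)
    (h1 : a1 W = 1) (h2r : a2r W = 0) (h2i : 0 < a2i W) :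
    0 < a3 W :=
  nonsingular_member_exists_general F W hW h1 h2r h2i

end Pencils
end
end

section
/- Let F be a finite field of characteristic 2 with q = |F|. For (x,y,z,t) ∈ F^4 let M(x,y,z,t) be the symmetric 3×3 matrix over F with rows (x,y,z), (y,t,0), (z,0,t). Then among the nonzero quadruples (x,y,z,t) ∈ F^4: exactly q−1 give a matrix of rank 1; exactly (q+1)(q−1) give a matrix of rank 2 whose diagonal entries are all zero; exactly (2q^2−1)(q−1) give a matrix of rank 2 with some nonzero diagonal entry; and exactly (q^3−q^2)(q−1) give a matrix of rank 3. Equivalently, the point-orbit distribution of the corresponding solid of type Ω1 in PG(5,q) is [1, q+1, 2q^2−1, q^3−q^2]. -/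
noncomputable section

open MvPolynomial

namespace Pencils

variable {F : Type*} [Field F]

section Omega1Aux

variable {K : Type*} [Field K]

lemma aux_rank_eq_three_of_det_ne_zero (A : Matrix (Fin 3) (Fin 3) K) (h : A.det ≠ 0) :
    A.rank = 3 := by
  have := Matrix.rank_of_isUnit A ((Matrix.isUnit_iff_isUnit_det A).mpr h.isUnit)
  simpa using this

lemma aux_rank_le_two_of_det_eq_zero (A : Matrix (Fin 3) (Fin 3) K) (h : A.det = 0) :
    A.rank ≤ 2 := by
  by_contra hlt
  push_neg at hlt
  have h3 : A.rank = 3 := le_antisymm (by simpa using A.rank_le_card_width) hlt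
  obtain ⟨c, hc0, hc⟩ := (Matrix.exists_mulVec_eq_zero_iff).mpr h
  have hrange : LinearMap.range A.mulVecLin = ⊤ := by
    apply Submodule.eq_top_of_finrank_eq
    rw [← Matrix.rank, h3]
    simp [Module.finrank_pi]
  have hsurj : Function.Surjective A.mulVecLin := LinearMap.range_eq_top.mp hrange
  have hinj : Function.Injective A.mulVecLin :=
    (LinearMap.injective_iff_surjective).mpr hsurj
  apply hc0
  apply hinj
  simpa [Matrix.mulVecLin_apply] using hc

lemma aux_two_le_rank_of_rows (A : Matrix (Fin 3) (Fin 3) K) (i j : Fin 3) (u w : Fin 3 → K)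
    (hu : A i = u) (hw : A j = w) (h : LinearIndependent K ![u, w]) : 2 ≤ A.rank := by
  subst hu hw
  rw [Matrix.rank_eq_finrank_span_row]
  have h2 : Module.finrank K (Submodule.span K (Set.range ![A i, A j])) = 2 := by
    simpa using finrank_span_eq_card h
  have hle : Submodule.span K (Set.range ![A i, A j]) ≤ Submodule.span K (Set.range A) := by
    apply Submodule.span_mono
    rintro x ⟨k, rfl⟩
    fin_cases k <;> exact ⟨_, rfl⟩
  calc (2:ℕ) = _ := h2.symm
    _ ≤ _ := Submodule.finrank_mono hle

lemma aux_rank_diag (x : K) (hx : x ≠ 0) :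
    (!![x,0,0;0,0,0;0,0,0] : Matrix (Fin 3) (Fin 3) K).rank = 1 := by
  classical
  have hd : (!![x,0,0;0,0,0;0,0,0] : Matrix (Fin 3) (Fin 3) K) =
      Matrix.diagonal ![x,0,0] := by
    ext i j
    fin_cases i <;> fin_cases j <;>
      simp [Matrix.diagonal, Matrix.vecHead, Matrix.vecTail]
  rw [hd, Matrix.rank_diagonal]
  rw [Fintype.card_eq_one_iff]
  refine ⟨⟨0, by simpa using hx⟩, ?_⟩
  rintro ⟨b, hb⟩
  fin_cases b
  · rfl
  · simp at hb
  · simp at hb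

lemma aux_detM (x y z t : K) (h2 : (2:K) = 0) :
    (!![x,y,z;y,t,0;z,0,t] : Matrix (Fin 3) (Fin 3) K).det = t*(x*t+y*y+z*z) := by
  simp [Matrix.det_fin_three]
  linear_combination (-(t*y*y) - t*z*z) * h2

-- linear independence of row pairs
lemma aux_li_a {y z t : K} (ht : t ≠ 0) :
    LinearIndependent K ![(![y,t,0] : Fin 3 → K), ![z,0,t]] := by
  rw [LinearIndependent.pair_iff]
  intro s r hsr
  have h1 := congr_fun hsr 1
  have h2 := congr_fun hsr 2
  simp at h1 h2
  exact ⟨h1.resolve_right ht, h2.resolve_right ht⟩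

lemma aux_li_b {x y z : K} (hy : y ≠ 0) :
    LinearIndependent K ![(![x,y,z] : Fin 3 → K), ![y,0,0]] := by
  rw [LinearIndependent.pair_iff]
  intro s r hsr
  have h1 := congr_fun hsr 1
  have h0 := congr_fun hsr 0
  simp at h1 h0
  have hs : s = 0 := h1.resolve_right hy
  subst hs
  simp at h0
  exact ⟨rfl, h0.resolve_right hy⟩

lemma aux_li_c {x y z : K} (hz : z ≠ 0) :
    LinearIndependent K ![(![x,y,z] : Fin 3 → K), ![z,0,0]] := by
  rw [LinearIndependent.pair_iff]
  intro s r hsr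
  have h2 := congr_fun hsr 2
  have h0 := congr_fun hsr 0
  simp at h2 h0
  have hs : s = 0 := h2.resolve_right hz
  subst hs
  simp at h0
  exact ⟨rfl, h0.resolve_right hz⟩

variable [CharP K 2]

lemma aux_rank3_iff (x y z t : K) :
    (!![x,y,z;y,t,0;z,0,t] : Matrix (Fin 3) (Fin 3) K).rank = 3 ↔
      (t ≠ 0 ∧ x*t+y*y+z*z ≠ 0) := by
  have hdet := aux_detM x y z t CharTwo.two_eq_zero
  constructor
  · intro h
    have hne : (!![x,y,z;y,t,0;z,0,t] : Matrix (Fin 3) (Fin 3) K).det ≠ 0 := by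
      intro h0
      have := aux_rank_le_two_of_det_eq_zero _ h0
      omega
    rw [hdet, mul_ne_zero_iff] at hne
    exact hne
  · rintro ⟨ht, he⟩
    exact aux_rank_eq_three_of_det_ne_zero _ (by rw [hdet]; exact mul_ne_zero ht he)

lemma aux_rank2_iff (x y z t : K) :
    (!![x,y,z;y,t,0;z,0,t] : Matrix (Fin 3) (Fin 3) K).rank = 2 ↔
      ((t ≠ 0 ∧ x*t+y*y+z*z = 0) ∨ (t = 0 ∧ ¬(y = 0 ∧ z = 0))) := by
  have hdet := aux_detM x y z t CharTwo.two_eq_zero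
  constructor
  · intro h
    rcases eq_or_ne t 0 with ht | ht
    · right
      refine ⟨ht, ?_⟩
      rintro ⟨hy, hz⟩
      subst ht; subst hy; subst hz
      rcases eq_or_ne x 0 with hx | hx
      · subst hx
        have h0 : (!![(0:K),0,0;0,0,0;0,0,0] : Matrix (Fin 3) (Fin 3) K) = 0 := by
          ext i j
          fin_cases i <;> fin_cases j <;> rfl
        rw [h0, Matrix.rank_zero] at h
        omega
      · have := aux_rank_diag x hx
        omega
    · left
      refine ⟨ht, ?_⟩
      by_contra he
      have := (aux_rank3_iff x y z t).mpr ⟨ht, he⟩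
      omega
  · rintro (⟨ht, he⟩ | ⟨ht, hyz⟩)
    · have hle := aux_rank_le_two_of_det_eq_zero _ (by rw [hdet, he, mul_zero])
      have hge := aux_two_le_rank_of_rows (!![x,y,z;y,t,0;z,0,t] : Matrix (Fin 3) (Fin 3) K) 1 2 ![y,t,0] ![z,0,t] rfl rfl (aux_li_a ht)
      omega
    · subst ht
      have hle := aux_rank_le_two_of_det_eq_zero _ (by rw [hdet]; ring)
      have hge : 2 ≤ (!![x,y,z;y,0,0;z,0,0] : Matrix (Fin 3) (Fin 3) K).rank := by
        rcases not_and_or.mp hyz with hy | hz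
        · exact aux_two_le_rank_of_rows _ 0 1 ![x,y,z] ![y,0,0] rfl rfl (aux_li_b hy)
        · exact aux_two_le_rank_of_rows _ 0 2 ![x,y,z] ![z,0,0] rfl rfl (aux_li_c hz)
      omega

lemma aux_rank1_iff (x y z t : K) (hv : ¬(x = 0 ∧ y = 0 ∧ z = 0 ∧ t = 0)) :
    (!![x,y,z;y,t,0;z,0,t] : Matrix (Fin 3) (Fin 3) K).rank = 1 ↔
      (y = 0 ∧ z = 0 ∧ t = 0 ∧ x ≠ 0) := by
  constructor
  · intro h
    have ht : t = 0 := by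
      by_contra ht
      have := aux_two_le_rank_of_rows (!![x,y,z;y,t,0;z,0,t] : Matrix (Fin 3) (Fin 3) K)
        1 2 ![y,t,0] ![z,0,t] rfl rfl (aux_li_a ht)
      omega
    subst ht
    have hy : y = 0 := by
      by_contra hy
      have := aux_two_le_rank_of_rows (!![x,y,z;y,0,0;z,0,0] : Matrix (Fin 3) (Fin 3) K)
        0 1 ![x,y,z] ![y,0,0] rfl rfl (aux_li_b hy)
      omega
    have hz : z = 0 := by
      by_contra hz
      have := aux_two_le_rank_of_rows (!![x,y,z;y,0,0;z,0,0] : Matrix (Fin 3) (Fin 3) K)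
        0 2 ![x,y,z] ![z,0,0] rfl rfl (aux_li_c hz)
      omega
    subst hy; subst hz
    exact ⟨rfl, rfl, rfl, fun hx => hv ⟨hx, rfl, rfl, rfl⟩⟩
  · rintro ⟨hy, hz, ht, hx⟩
    subst hy; subst hz; subst ht
    exact aux_rank_diag x hx

lemma aux_ne_zero_iff4 (v : Fin 4 → K) :
    v ≠ 0 ↔ ¬(v 0 = 0 ∧ v 1 = 0 ∧ v 2 = 0 ∧ v 3 = 0) := by
  constructor
  · intro h hc
    exact h (funext fun i => by fin_cases i <;> simp [hc.1, hc.2.1, hc.2.2.1, hc.2.2.2])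
  · intro h hv
    exact h (by simp [hv])

lemma aux_card_ne {α : Type*} [Fintype α] [DecidableEq α] (a : α) :
    Nat.card {x : α // x ≠ a} = Fintype.card α - 1 := by
  rw [Nat.card_eq_fintype_card, Fintype.card_subtype_compl, Fintype.card_subtype_eq]

end Omega1Aux

/-- rank counts for the nonzero matrices `M(x,y,z,t)` with rows
`(x,y,z), (y,t,0), (z,0,t)`, giving the point-orbit distribution
`[1, q+1, 2q²−1, q³−q²]` of the solid of type Ω1. -/
theorem omega1_point_orbit_distribution (F : Type*) [Field F] [Fintype F] [CharP F 2] :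
    let q := Fintype.card F
    let M : (Fin 4 → F) → Matrix (Fin 3) (Fin 3) F := fun v =>
      !![v 0, v 1, v 2; v 1, v 3, 0; v 2, 0, v 3]
    Nat.card {v : Fin 4 → F // v ≠ 0 ∧ (M v).rank = 1} = q - 1 ∧
    Nat.card {v : Fin 4 → F // v ≠ 0 ∧ (M v).rank = 2 ∧
      M v 0 0 = 0 ∧ M v 1 1 = 0 ∧ M v 2 2 = 0} = (q + 1) * (q - 1) ∧
    Nat.card {v : Fin 4 → F // v ≠ 0 ∧ (M v).rank = 2 ∧
      ¬(M v 0 0 = 0 ∧ M v 1 1 = 0 ∧ M v 2 2 = 0)} = (2 * q ^ 2 - 1) * (q - 1) ∧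
    Nat.card {v : Fin 4 → F // v ≠ 0 ∧ (M v).rank = 3} = (q ^ 3 - q ^ 2) * (q - 1) := by
  classical
  intro q M
  have hq : q = Fintype.card F := rfl
  have hq1 : 1 ≤ q := Fintype.card_pos
  have hqq : 1 ≤ q * q := le_trans hq1 (Nat.le_mul_of_pos_left q hq1)
  have hM : ∀ v : Fin 4 → F, M v = !![v 0, v 1, v 2; v 1, v 3, 0; v 2, 0, v 3] := fun _ => rfl
  have h2K : (2 : F) = 0 := CharTwo.two_eq_zero
  -- characterizations
  have key1 : ∀ v : Fin 4 → F, (v ≠ 0 ∧ (M v).rank = 1) ↔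
      (v 1 = 0 ∧ v 2 = 0 ∧ v 3 = 0 ∧ v 0 ≠ 0) := by
    intro v
    rw [hM, aux_ne_zero_iff4]
    constructor
    · rintro ⟨hv, hr⟩
      exact (aux_rank1_iff (v 0) (v 1) (v 2) (v 3) hv).mp hr
    · rintro ⟨h1, h2, h3, h0⟩
      have hv : ¬(v 0 = 0 ∧ v 1 = 0 ∧ v 2 = 0 ∧ v 3 = 0) := fun hc => h0 hc.1
      exact ⟨hv, (aux_rank1_iff (v 0) (v 1) (v 2) (v 3) hv).mpr ⟨h1, h2, h3, h0⟩⟩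
  have key2 : ∀ v : Fin 4 → F, (v ≠ 0 ∧ (M v).rank = 2 ∧
      M v 0 0 = 0 ∧ M v 1 1 = 0 ∧ M v 2 2 = 0) ↔
      (v 0 = 0 ∧ v 3 = 0 ∧ ¬(v 1 = 0 ∧ v 2 = 0)) := by
    intro v
    constructor
    · rintro ⟨hv, hr, hd0, hd1, hd2⟩
      rw [hM] at hr
      rcases (aux_rank2_iff (v 0) (v 1) (v 2) (v 3)).mp hr with ⟨ht, _⟩ | ⟨ht, hyz⟩
      · exact absurd (show v 3 = 0 from hd1) ht
      · exact ⟨hd0, ht, hyz⟩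
    · rintro ⟨h0, h3, hyz⟩
      refine ⟨(aux_ne_zero_iff4 v).mpr (fun hc => hyz ⟨hc.2.1, hc.2.2.1⟩), ?_, h0, h3, h3⟩
      rw [hM]
      exact (aux_rank2_iff (v 0) (v 1) (v 2) (v 3)).mpr (Or.inr ⟨h3, hyz⟩)
  have key3 : ∀ v : Fin 4 → F, (v ≠ 0 ∧ (M v).rank = 2 ∧
      ¬(M v 0 0 = 0 ∧ M v 1 1 = 0 ∧ M v 2 2 = 0)) ↔
      ((v 3 ≠ 0 ∧ v 0 * v 3 + v 1 * v 1 + v 2 * v 2 = 0) ∨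
        (v 3 = 0 ∧ v 0 ≠ 0 ∧ ¬(v 1 = 0 ∧ v 2 = 0))) := by
    intro v
    constructor
    · rintro ⟨hv, hr, hd⟩
      rw [hM] at hr
      rcases (aux_rank2_iff (v 0) (v 1) (v 2) (v 3)).mp hr with ⟨ht, he⟩ | ⟨ht, hyz⟩
      · exact Or.inl ⟨ht, he⟩
      · refine Or.inr ⟨ht, ?_, hyz⟩
        intro h0
        exact hd ⟨h0, ht, ht⟩
    · rintro (⟨ht, he⟩ | ⟨ht, h0, hyz⟩)
      · refine ⟨(aux_ne_zero_iff4 v).mpr (fun hc => ht hc.2.2.2), ?_, ?_⟩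
        · rw [hM]
          exact (aux_rank2_iff (v 0) (v 1) (v 2) (v 3)).mpr (Or.inl ⟨ht, he⟩)
        · intro hd
          exact ht hd.2.1
      · refine ⟨(aux_ne_zero_iff4 v).mpr (fun hc => h0 hc.1), ?_, ?_⟩
        · rw [hM]
          exact (aux_rank2_iff (v 0) (v 1) (v 2) (v 3)).mpr (Or.inr ⟨ht, hyz⟩)
        · intro hd
          exact h0 hd.1
  have key4 : ∀ v : Fin 4 → F, (v ≠ 0 ∧ (M v).rank = 3) ↔
      (v 3 ≠ 0 ∧ v 0 * v 3 + v 1 * v 1 + v 2 * v 2 ≠ 0) := by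
    intro v
    constructor
    · rintro ⟨hv, hr⟩
      rw [hM] at hr
      exact (aux_rank3_iff (v 0) (v 1) (v 2) (v 3)).mp hr
    · rintro ⟨ht, he⟩
      refine ⟨(aux_ne_zero_iff4 v).mpr (fun hc => ht hc.2.2.2), ?_⟩
      rw [hM]
      exact (aux_rank3_iff (v 0) (v 1) (v 2) (v 3)).mpr ⟨ht, he⟩
  -- explicit equivalences
  have E1 : {v : Fin 4 → F // v 1 = 0 ∧ v 2 = 0 ∧ v 3 = 0 ∧ v 0 ≠ 0} ≃ {x : F // x ≠ 0} :=
    { toFun := fun p => ⟨p.1 0, p.2.2.2.2⟩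
      invFun := fun x => ⟨![x.1, 0, 0, 0], rfl, rfl, rfl, x.2⟩
      left_inv := by
        rintro ⟨v, h1, h2, h3, h0⟩
        apply Subtype.ext
        funext i
        fin_cases i <;> simp [h1, h2, h3]
      right_inv := fun x => rfl }
  have E2 : {v : Fin 4 → F // v 0 = 0 ∧ v 3 = 0 ∧ ¬(v 1 = 0 ∧ v 2 = 0)} ≃
      {p : F × F // p ≠ 0} :=
    { toFun := fun p => ⟨(p.1 1, p.1 2), by
        intro h
        exact p.2.2.2 ⟨by simpa using congrArg Prod.fst h, by simpa using congrArg Prod.snd h⟩⟩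
      invFun := fun p => ⟨![0, p.1.1, p.1.2, 0], rfl, rfl, by
        rintro ⟨h1, h2⟩
        exact p.2 (Prod.ext h1 h2)⟩
      left_inv := by
        rintro ⟨v, h0, h3, hyz⟩
        apply Subtype.ext
        funext i
        fin_cases i <;> simp [h0, h3]
      right_inv := fun p => rfl }
  have E3P : {v : Fin 4 → F // v 3 ≠ 0 ∧ v 0 * v 3 + v 1 * v 1 + v 2 * v 2 = 0} ≃
      ({t : F // t ≠ 0} × F × F) :=
    { toFun := fun p => (⟨p.1 3, p.2.1⟩, p.1 1, p.1 2)
      invFun := fun w => ⟨![(w.2.1 * w.2.1 + w.2.2 * w.2.2) * (w.1.1)⁻¹, w.2.1, w.2.2, w.1.1],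
        w.1.2, by
          show ((w.2.1 * w.2.1 + w.2.2 * w.2.2) * (w.1.1)⁻¹) * w.1.1 +
            w.2.1 * w.2.1 + w.2.2 * w.2.2 = 0
          rw [mul_assoc, inv_mul_cancel₀ w.1.2, mul_one]
          linear_combination (w.2.1 * w.2.1 + w.2.2 * w.2.2) * h2K⟩
      left_inv := by
        rintro ⟨v, h3, he⟩
        apply Subtype.ext
        funext i
        fin_cases i
        · show (v 1 * v 1 + v 2 * v 2) * (v 3)⁻¹ = v 0
          field_simp
          linear_combination he - v 0 * v 3 * h2K
        · rfl
        · rfl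
        · rfl
      right_inv := fun w => rfl }
  have E3Q : {v : Fin 4 → F // v 3 = 0 ∧ v 0 ≠ 0 ∧ ¬(v 1 = 0 ∧ v 2 = 0)} ≃
      ({x : F // x ≠ 0} × {p : F × F // p ≠ 0}) :=
    { toFun := fun p => (⟨p.1 0, p.2.2.1⟩, ⟨(p.1 1, p.1 2), by
        intro h
        exact p.2.2.2 ⟨by simpa using congrArg Prod.fst h, by simpa using congrArg Prod.snd h⟩⟩)
      invFun := fun w => ⟨![w.1.1, w.2.1.1, w.2.1.2, 0], rfl, w.1.2, by
        rintro ⟨h1, h2⟩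
        exact w.2.2 (Prod.ext h1 h2)⟩
      left_inv := by
        rintro ⟨v, h3, h0, hyz⟩
        apply Subtype.ext
        funext i
        fin_cases i <;> simp [h3]
      right_inv := fun w => rfl }
  have E4 : {v : Fin 4 → F // v 3 ≠ 0 ∧ v 0 * v 3 + v 1 * v 1 + v 2 * v 2 ≠ 0} ≃
      ({t : F // t ≠ 0} × F × F × {u : F // u ≠ 0}) :=
    { toFun := fun p => (⟨p.1 3, p.2.1⟩, p.1 1, p.1 2,
        ⟨p.1 0 * p.1 3 + p.1 1 * p.1 1 + p.1 2 * p.1 2, p.2.2⟩)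
      invFun := fun w =>
        ⟨![(w.2.2.2.1 + w.2.1 * w.2.1 + w.2.2.1 * w.2.2.1) * (w.1.1)⁻¹,
            w.2.1, w.2.2.1, w.1.1], w.1.2, by
          show ((w.2.2.2.1 + w.2.1 * w.2.1 + w.2.2.1 * w.2.2.1) * (w.1.1)⁻¹) * w.1.1 +
            w.2.1 * w.2.1 + w.2.2.1 * w.2.2.1 ≠ 0
          rw [mul_assoc, inv_mul_cancel₀ w.1.2, mul_one]
          intro hc
          apply w.2.2.2.2
          linear_combination hc - (w.2.1 * w.2.1 + w.2.2.1 * w.2.2.1) * h2K⟩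
      left_inv := by
        rintro ⟨v, h3, he⟩
        apply Subtype.ext
        funext i
        fin_cases i
        · show ((v 0 * v 3 + v 1 * v 1 + v 2 * v 2) + v 1 * v 1 + v 2 * v 2) * (v 3)⁻¹ = v 0
          field_simp
          linear_combination (v 1 * v 1 + v 2 * v 2) * h2K
        · rfl
        · rfl
        · rfl
      right_inv := by
        rintro ⟨⟨t, ht⟩, y, z, ⟨u, hu⟩⟩
        simp only [Prod.mk.injEq, Subtype.mk.injEq]
        refine ⟨rfl, rfl, rfl, ?_⟩
        show ((u + y * y + z * z) * t⁻¹) * t + y * y + z * z = u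
        rw [mul_assoc, inv_mul_cancel₀ ht, mul_one]
        linear_combination (y * y + z * z) * h2K }
  refine ⟨?_, ?_, ?_, ?_⟩
  · rw [Nat.card_congr ((Equiv.subtypeEquivRight key1).trans E1), aux_card_ne]
  · rw [Nat.card_congr ((Equiv.subtypeEquivRight key2).trans E2), aux_card_ne,
      Fintype.card_prod, ← hq]
    zify [hq1, hqq]
    ring
  · set P : (Fin 4 → F) → Prop := fun v =>
      v 3 ≠ 0 ∧ v 0 * v 3 + v 1 * v 1 + v 2 * v 2 = 0 with hP
    set Q : (Fin 4 → F) → Prop := fun v =>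
      v 3 = 0 ∧ v 0 ≠ 0 ∧ ¬(v 1 = 0 ∧ v 2 = 0) with hQ
    have hdisj : Disjoint P Q := by
      rw [Pi.disjoint_iff]
      intro v
      rw [Prop.disjoint_iff]
      rintro ⟨⟨h3, -⟩, h3', -⟩
      exact h3 h3'
    rw [Nat.card_congr ((Equiv.subtypeEquivRight key3).trans (subtypeOrEquiv P Q hdisj)),
      Nat.card_sum, Nat.card_congr E3P, Nat.card_congr E3Q, Nat.card_prod, Nat.card_prod,
      Nat.card_prod, aux_card_ne, aux_card_ne]
    simp only [Nat.card_eq_fintype_card, Fintype.card_prod, ← hq]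
    have h2q2 : 1 ≤ 2 * q ^ 2 := by nlinarith
    zify [hq1, hqq, h2q2]
    ring
  · rw [Nat.card_congr ((Equiv.subtypeEquivRight key4).trans E4), Nat.card_prod,
      Nat.card_prod, Nat.card_prod, aux_card_ne]
    simp only [Nat.card_eq_fintype_card, ← hq]
    have hqcube : q ^ 2 ≤ q ^ 3 := Nat.pow_le_pow_right hq1 (by norm_num) |>.trans_eq rfl
    zify [hq1, hqcube]
    ring

end Pencils
end
end

section
/- Let F be a finite field of characteristic 2 with q = |F|, and let W4 be the pencil of conics spanned by X0·X1 and X1·X2. Then every nonzero element of W4 is a product of two linearly independent linear forms over F (so all q+1 members are real line pairs), W4 has exactly q+2 base points, and the stabilizer {g ∈ GL(3,F) : g • W4 = W4} has cardinality (q−1)·(q^2−1)·(q^2−q). -/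
noncomputable section

open MvPolynomial

namespace Pencils

variable {F : Type*} [Field F]

/-! Every element of `W4` is `X 1 * (a • X 0 + c • X 2)`, a pair of distinct lines. The common
zeros of `W4` are the plane `x₁ = 0` together with the point `(0 : 1 : 0)`, which gives
`(q + 1) + 1` base points. A matrix stabilising `W4` maps this configuration into itself, so it
preserves the plane and the point separately: it is block diagonal with a `1 × 1` block on
`x₁` and a `2 × 2` block on `x₀, x₂`. Conversely every such invertible matrix stabilises `W4`,
so the stabiliser is `GL₁(F) × GL₂(F)`. -/

open scoped Matrix

lemma act_act (g h : Matrix (Fin 3) (Fin 3) F) (f : Poly F) :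
    act g (act h f) = act (h * g) f := by
  simp only [act, AlgHom.toLinearMap_apply, comp_aeval_apply]
  congr 2
  funext i
  simp only [map_sum, map_mul, aeval_C, aeval_X, algebraMap_eq, Matrix.mul_apply,
    Finset.mul_sum, Finset.sum_mul, ← mul_assoc]
  exact Finset.sum_comm

lemma act_one (f : Poly F) : act (1 : Matrix (Fin 3) (Fin 3) F) f = f := by
  simp [act, Matrix.one_apply]

lemma eval_act (g : Matrix (Fin 3) (Fin 3) F) (f : Poly F) (v : Fin 3 → F) :
    eval v (act g f) = eval (g *ᵥ v) f := by
  change aeval v (act g f) = aeval (g *ᵥ v) f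
  rw [act, AlgHom.toLinearMap_apply, comp_aeval_apply]
  congr 2
  funext i
  simp [Matrix.mulVec, dotProduct]

lemma act_injective (g : (Matrix (Fin 3) (Fin 3) F)ˣ) : Function.Injective (act g.val) :=
  fun f h hfh => by
    simpa [act_act, act_one] using congrArg (act (g⁻¹).val) hfh

lemma map_act_eq_of_le (g : (Matrix (Fin 3) (Fin 3) F)ˣ) {W : Submodule F (Poly F)}
    [FiniteDimensional F W] (h : W.map (act g.val) ≤ W) : W.map (act g.val) = W :=
  Submodule.eq_of_le_of_finrank_eq h
    (LinearEquiv.finrank_eq (Submodule.equivMapOfInjective _ (act_injective g) W)).symm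

def W4 : Submodule F (Poly F) := Submodule.span F {X 0 * X 1, X 1 * X 2}

instance finiteDimensional_W4 : FiniteDimensional F (W4 : Submodule F (Poly F)) :=
  FiniteDimensional.span_of_finite F (Set.toFinite _)

lemma mem_W4 {f : Poly F} : f ∈ W4 ↔ ∃ a c : F, f = X 1 * (C a * X 0 + C c * X 2) := by
  simp only [W4, Submodule.mem_span_pair, smul_eq_C_mul]
  exact exists₂_congr fun a c => ⟨fun h => h ▸ by ring, fun h => h ▸ by ring⟩

lemma linearIndependent_X_one_linearForm {a c : F} (hac : a ≠ 0 ∨ c ≠ 0) :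
    LinearIndependent F ![(X 1 : Poly F), C a * X 0 + C c * X 2] := by
  rw [LinearIndependent.pair_iff]
  intro s t hst
  have hcoeff (i : Fin 3) :
      coeff (Finsupp.single i 1) (s • (X 1 : Poly F) + t • (C a * X 0 + C c * X 2)) = 0 := by
    rw [hst, coeff_zero]
  have h0 := hcoeff 0
  have h1 := hcoeff 1
  have h2 := hcoeff 2
  simp only [smul_eq_C_mul, coeff_add, coeff_C_mul, coeff_X, Finsupp.single_eq_single_iff,
    Fin.reduceEq, one_ne_zero, and_true, and_self, or_self, if_true, if_false, mul_zero, mul_one,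
    add_zero, zero_add, mul_eq_zero] at h0 h1 h2
  tauto

theorem isRealPair_W4 : IsRealPair (W4 : Submodule F (Poly F)) := by
  intro f hf hf0
  obtain ⟨a, c, rfl⟩ := mem_W4.mp hf
  have hac : a ≠ 0 ∨ c ≠ 0 := by
    by_contra! h
    simp [h.1, h.2] at hf0
  exact ⟨X 1, _, isHomogeneous_X _ _, (isHomogeneous_C_mul_X a 0).add (isHomogeneous_C_mul_X c 2),
    linearIndependent_X_one_linearForm hac, rfl⟩

def commonZeros (W : Submodule F (Poly F)) : Set (Fin 3 → F) :=
  {v | ∀ f ∈ W, eval v f = 0}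

lemma mem_commonZeros_span {s : Set (Poly F)} {v : Fin 3 → F} :
    v ∈ commonZeros (Submodule.span F s) ↔ ∀ f ∈ s, eval v f = 0 := by
  refine ⟨fun h f hf => h f (Submodule.subset_span hf), fun h f hf => ?_⟩
  induction hf using Submodule.span_induction with
  | mem f hf => exact h f hf
  | zero => simp
  | add f f' _ _ hf hf' => simp [hf, hf']
  | smul a f _ hf => simp [smul_eq_C_mul, hf]

lemma mem_commonZeros_W4 {v : Fin 3 → F} :
    v ∈ commonZeros W4 ↔ v 1 = 0 ∨ v 0 = 0 ∧ v 2 = 0 := by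
  simp only [W4, mem_commonZeros_span, Set.mem_insert_iff, Set.mem_singleton_iff,
    forall_eq_or_imp, forall_eq, map_mul, eval_X, mul_eq_zero]
  tauto

lemma mapsTo_commonZeros {g : Matrix (Fin 3) (Fin 3) F} {W : Submodule F (Poly F)}
    (hg : W.map (act g) ≤ W) : Set.MapsTo (g *ᵥ ·) (commonZeros W) (commonZeros W) :=
  fun _ hv f hf => by
    rw [← eval_act]
    exact hv _ (hg (Submodule.mem_map_of_mem hf))

lemma isBasePoint_iff_subset_commonZeros {W : Submodule F (Poly F)}
    {P : Submodule F (Fin 3 → F)} :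
    IsBasePoint W P ↔ Module.finrank F P = 1 ∧ (P : Set (Fin 3 → F)) ⊆ commonZeros W :=
  ⟨fun ⟨h1, h2⟩ => ⟨h1, fun v hv f hf => h2 f hf v hv⟩,
    fun ⟨h1, h2⟩ => ⟨h1, fun f hf _ hv => h2 hv f hf⟩⟩

lemma isBasePoint_W4_span_singleton {v : Fin 3 → F} (hv0 : v ≠ 0) (hv : v ∈ commonZeros W4) :
    IsBasePoint W4 (F ∙ v) := by
  refine isBasePoint_iff_subset_commonZeros.mpr ⟨finrank_span_singleton hv0, fun w hw => ?_⟩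
  obtain ⟨c, rfl⟩ := Submodule.mem_span_singleton.mp hw
  rw [mem_commonZeros_W4] at hv ⊢
  simp only [Pi.smul_apply, smul_eq_mul, mul_eq_zero]
  tauto

def basePointRep : Option (Option F) → Fin 3 → F
  | none => ![0, 1, 0]
  | some none => ![0, 0, 1]
  | some (some t) => ![1, 0, t]

lemma basePointRep_ne_zero (x : Option (Option F)) : basePointRep x ≠ 0 := by
  rcases x with _ | _ | t <;> simp [basePointRep, funext_iff, Fin.forall_fin_succ]

lemma basePointRep_mem_commonZeros (x : Option (Option F)) : basePointRep x ∈ commonZeros W4 := by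
  rcases x with _ | _ | t <;> simp [basePointRep, mem_commonZeros_W4]

lemma span_basePointRep_injective :
    Function.Injective fun x : Option (Option F) => F ∙ basePointRep x := by
  intro x y hxy
  obtain ⟨c, hc⟩ := Submodule.span_singleton_eq_span_singleton.mp hxy
  have h0 := congrFun hc 0
  have h1 := congrFun hc 1
  have h2 := congrFun hc 2
  rcases x with _ | _ | t <;> rcases y with _ | _ | s <;> simp_all [basePointRep, Units.smul_def]

lemma exists_span_basePointRep {v : Fin 3 → F} (hv0 : v ≠ 0) (hv : v ∈ commonZeros W4) :
    ∃ x, F ∙ basePointRep x = F ∙ v := by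
  rw [mem_commonZeros_W4] at hv
  rcases hv with hv1 | ⟨hv0', hv2⟩
  · by_cases h0 : v 0 = 0
    · have h2 : v 2 ≠ 0 := fun h2 => hv0 (funext fun i => by fin_cases i <;> assumption)
      refine ⟨some none,
        Submodule.span_singleton_eq_span_singleton.mpr ⟨Units.mk0 _ h2, ?_⟩⟩
      funext i; fin_cases i <;> simp [basePointRep, h0, hv1]
    · refine ⟨some (some (v 2 / v 0)),
        Submodule.span_singleton_eq_span_singleton.mpr ⟨Units.mk0 _ h0, ?_⟩⟩
      funext i; fin_cases i <;> simp [basePointRep, hv1, mul_div_cancel₀ _ h0]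
  · have h1 : v 1 ≠ 0 := fun h1 => hv0 (funext fun i => by fin_cases i <;> assumption)
    refine ⟨none, Submodule.span_singleton_eq_span_singleton.mpr ⟨Units.mk0 _ h1, ?_⟩⟩
    funext i; fin_cases i <;> simp [basePointRep, hv0', hv2]

lemma b_W4 [Fintype F] : b (W4 : Submodule F (Poly F)) = Fintype.card F + 2 := by
  let e : Option (Option F) → {P : Submodule F (Fin 3 → F) // IsBasePoint W4 P} := fun x =>
    ⟨F ∙ basePointRep x,
      isBasePoint_W4_span_singleton (basePointRep_ne_zero x) (basePointRep_mem_commonZeros x)⟩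
  have he : Function.Bijective e := by
    refine ⟨fun x y hxy => span_basePointRep_injective (congrArg Subtype.val hxy), ?_⟩
    rintro ⟨P, hP⟩
    obtain ⟨h1, hsub⟩ := isBasePoint_iff_subset_commonZeros.mp hP
    let p := Projectivization.mk'' P h1
    have hPp : P = F ∙ p.rep := (Projectivization.submodule_mk'' P h1).symm.trans p.submodule_eq
    have hrep : p.rep ∈ commonZeros W4 := hsub (hPp ▸ Submodule.mem_span_singleton_self p.rep)
    obtain ⟨x, hx⟩ := exists_span_basePointRep p.rep_nonzero hrep
    exact ⟨x, Subtype.ext (hx.trans hPp.symm)⟩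
  rw [b, ← Nat.card_eq_of_bijective e he, Nat.card_eq_fintype_card]
  simp

lemma entries_eq_zero_of_mapsTo_commonZeros_W4 {g : Matrix (Fin 3) (Fin 3) F}
    (hdet : g.det ≠ 0) (hg : Set.MapsTo (g *ᵥ ·) (commonZeros W4) (commonZeros W4)) :
    g 0 1 = 0 ∧ g 1 0 = 0 ∧ g 1 2 = 0 ∧ g 2 1 = 0 := by
  have hcol (v : Fin 3 → F) (hv : v ∈ commonZeros W4) := mem_commonZeros_W4.mp (hg hv)
  have c0 := hcol ![1, 0, 0] (by simp [mem_commonZeros_W4])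
  have c1 := hcol ![0, 1, 0] (by simp [mem_commonZeros_W4])
  have c2 := hcol ![0, 0, 1] (by simp [mem_commonZeros_W4])
  have c02 := hcol ![1, 0, 1] (by simp [mem_commonZeros_W4])
  simp only [Matrix.mulVec, dotProduct, Fin.sum_univ_three, Matrix.cons_val_zero,
    Matrix.cons_val_one, Matrix.cons_val, mul_one, mul_zero, add_zero, zero_add] at c0 c1 c2 c02
  rw [Matrix.det_fin_three] at hdet
  -- Columns `0`, `2` and their sum each lie in the plane `v 1 = 0` or on the line
  -- `v 0 = v 2 = 0`; if two of them lie in the same one, all three do, and the line is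
  -- excluded by `hdet`.
  obtain ⟨h10, h12⟩ : g 1 0 = 0 ∧ g 1 2 = 0 := by
    rcases c0 with h0 | ⟨h00, h20⟩ <;> rcases c2 with h2 | ⟨h02, h22⟩ <;>
      rcases c02 with h | ⟨ha, hb⟩ <;> grind
  have h11 : g 1 1 ≠ 0 := fun h11 => hdet (by rw [h10, h11, h12]; ring)
  obtain ⟨h01, h21⟩ := c1.resolve_left h11
  exact ⟨h01, h10, h12, h21⟩

def blockMatrix (l : F) (A : Matrix (Fin 2) (Fin 2) F) : Matrix (Fin 3) (Fin 3) F :=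
  !![A 0 0, 0, A 0 1; 0, l, 0; A 1 0, 0, A 1 1]

lemma blockMatrix_mul (l l' : F) (A A' : Matrix (Fin 2) (Fin 2) F) :
    blockMatrix l A * blockMatrix l' A' = blockMatrix (l * l') (A * A') := by
  ext i j
  fin_cases i <;> fin_cases j <;>
    simp [blockMatrix, Matrix.mul_apply, Fin.sum_univ_three, Fin.sum_univ_two]

lemma blockMatrix_one : blockMatrix (1 : F) 1 = 1 := by
  ext i j
  fin_cases i <;> fin_cases j <;> simp [blockMatrix]

lemma det_blockMatrix (l : F) (A : Matrix (Fin 2) (Fin 2) F) :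
    (blockMatrix l A).det = l * A.det := by
  simp only [blockMatrix, Matrix.det_fin_three, Matrix.det_fin_two, Matrix.of_apply,
    Matrix.cons_val', Matrix.cons_val_zero, Matrix.cons_val_fin_one, Matrix.cons_val_one,
    Matrix.cons_val]
  ring

lemma eq_blockMatrix {g : Matrix (Fin 3) (Fin 3) F}
    (hg : g 0 1 = 0 ∧ g 1 0 = 0 ∧ g 1 2 = 0 ∧ g 2 1 = 0) :
    g = blockMatrix (g 1 1) (g.submatrix ![0, 2] ![0, 2]) := by
  obtain ⟨h01, h10, h12, h21⟩ := hg
  ext i j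
  fin_cases i <;> fin_cases j <;> simp [blockMatrix, h01, h10, h12, h21]

lemma map_act_blockMatrix_le (l : F) (A : Matrix (Fin 2) (Fin 2) F) :
    W4.map (act (blockMatrix l A)) ≤ W4 := by
  rintro _ ⟨f, hf, rfl⟩
  obtain ⟨a, c, rfl⟩ := mem_W4.mp hf
  refine mem_W4.mpr ⟨l * (a * A 0 0 + c * A 1 0), l * (a * A 0 1 + c * A 1 1), ?_⟩
  simp only [act, AlgHom.toLinearMap_apply, map_mul, map_add, aeval_X, algHom_C, algebraMap_eq,
    blockMatrix, Matrix.of_apply, Matrix.cons_val', Matrix.cons_val_fin_one, Fin.sum_univ_three,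
    Matrix.cons_val_zero, Matrix.cons_val_one, Matrix.cons_val, C_0]
  ring

def blockUnit (l : Fˣ) (A : GL (Fin 2) F) : (Matrix (Fin 3) (Fin 3) F)ˣ where
  val := blockMatrix l A
  inv := blockMatrix l⁻¹ A⁻¹
  val_inv := by simp [blockMatrix_mul, blockMatrix_one]
  inv_val := by simp [blockMatrix_mul, blockMatrix_one]

lemma blockUnit_bijective :
    Function.Bijective fun p : Fˣ × GL (Fin 2) F =>
      (⟨blockUnit p.1 p.2, map_act_eq_of_le _ (map_act_blockMatrix_le _ _)⟩ :
        {g : (Matrix (Fin 3) (Fin 3) F)ˣ // W4.map (act g.val) = W4}) := by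
  refine ⟨fun ⟨l, A⟩ ⟨l', A'⟩ h => ?_, fun ⟨g, hg⟩ => ?_⟩
  · have h' : blockMatrix (l : F) A = blockMatrix (l' : F) A' := congrArg (fun g => g.1.val) h
    refine Prod.ext (Units.ext (by simpa [blockMatrix] using congrFun₂ h' 1 1)) (Units.ext ?_)
    ext i j
    have := congrFun₂ h' (![0, 2] i) (![0, 2] j)
    fin_cases i <;> fin_cases j <;> simpa [blockMatrix] using this
  · have hdet : g.val.det ≠ 0 := g.isUnit.map Matrix.detMonoidHom |>.ne_zero
    have hshape := entries_eq_zero_of_mapsTo_commonZeros_W4 hdet (mapsTo_commonZeros hg.le)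
    have hblock := eq_blockMatrix hshape
    rw [hblock, det_blockMatrix] at hdet
    refine ⟨⟨Units.mk0 _ (left_ne_zero_of_mul hdet),
      Matrix.GeneralLinearGroup.mkOfDetNeZero _ (right_ne_zero_of_mul hdet)⟩, ?_⟩
    exact Subtype.ext (Units.ext hblock.symm)

lemma card_stabilizer_W4 [Fintype F] :
    Nat.card {g : (Matrix (Fin 3) (Fin 3) F)ˣ // W4.map (act g.val) = W4} =
      (Fintype.card F - 1) * (Fintype.card F ^ 2 - 1) * (Fintype.card F ^ 2 - Fintype.card F) := by
  classical
  rw [← Nat.card_eq_of_bijective _ blockUnit_bijective, Nat.card_prod, Nat.card_eq_fintype_card,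
    Fintype.card_units, Matrix.card_GL_field, Fin.prod_univ_two]
  simp [mul_assoc]

theorem omega4_pencil_general (F : Type*) [Field F] [Fintype F] :
    let q := Fintype.card F
    let W4 : Submodule F (Poly F) := Submodule.span F {X 0 * X 1, X 1 * X 2}
    (∀ f ∈ W4, f ≠ 0 → ∃ ℓ m : Poly F, ℓ.IsHomogeneous 1 ∧ m.IsHomogeneous 1 ∧
      LinearIndependent F ![ℓ, m] ∧ f = ℓ * m) ∧
    b W4 = q + 2 ∧
    Nat.card {g : (Matrix (Fin 3) (Fin 3) F)ˣ // Submodule.map (act g.val) W4 = W4} =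
      (q - 1) * (q ^ 2 - 1) * (q ^ 2 - q) :=
  ⟨isRealPair_W4, b_W4, card_stabilizer_W4⟩

/-- in the pencil `W4 = ⟨X0·X1, X1·X2⟩` every nonzero element is a product of
two linearly independent linear forms, `W4` has exactly `q+2` base points, and its
stabiliser in `GL(3,F)` has cardinality `(q−1)(q²−1)(q²−q)`. -/
theorem omega4_pencil (F : Type*) [Field F] [Fintype F] [CharP F 2] :
    let q := Fintype.card F
    let W4 : Submodule F (Poly F) := Submodule.span F {X 0 * X 1, X 1 * X 2}
    (∀ f ∈ W4, f ≠ 0 → ∃ ℓ m : Poly F, ℓ.IsHomogeneous 1 ∧ m.IsHomogeneous 1 ∧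
      LinearIndependent F ![ℓ, m] ∧ f = ℓ * m) ∧
    b W4 = q + 2 ∧
    Nat.card {g : (Matrix (Fin 3) (Fin 3) F)ˣ // Submodule.map (act g.val) W4 = W4} =
      (q - 1) * (q ^ 2 - 1) * (q ^ 2 - q) :=
  omega4_pencil_general F

end Pencils
end
end

section
/- Let F be a finite field of characteristic 2 with q = |F|, let Tr : F → F_2 be the absolute trace map, and let γ ∈ F satisfy Tr(γ) = 1. Let W14 be the pencil of conics spanned by X1^2 + X0·X2 + γ·X2^2 and γ·X0^2 + X0·X1 + X1^2. Then exactly one of the q+1 members of W14 is singular, namely the one spanned by γ·X0^2 + X0·X1 + X1^2, and this singular member is an imaginary line pair (it has no nonzero linear form over F as a factor); the other q members are nonsingular; and W14 has no base points. In particular, there exists a pencil of conics in PG(2,q), q even, containing exactly one pair of conjugate imaginary lines and q nonsingular conics. -/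
/-!
Write a member of the pencil as `α·f + β·s` with `f = X1² + X0·X2 + γ·X2²` and
`s = γ·X0² + X0·X1 + X1²`; its discriminant is `α·(α² + αβ + γβ²)`. Since the trace of
`t² + t` is `t^q + t = 0`, the condition `Tr γ = 1` says that `t² + t = γ` has no root in `F`,
i.e. that the binary form `x² + xy + γy²` is anisotropic. Hence the only singular member is
`⟨s⟩`, and the `q` members `⟨f + β·s⟩` are nonsingular. By anisotropy `s` vanishes at no point
other than `(0 : 0 : 1)`, while every line has another point, so `s` has no linear factor; and
`f` does not vanish at `(0 : 0 : 1)`, so there are no base points. In characteristic 2 every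
product of two linear forms is singular, so a double line or real line pair in the pencil would
have to be `⟨s⟩`, which is impossible.
-/

noncomputable section

open MvPolynomial

namespace Pencils

variable {F : Type*} [Field F]

section ArtinSchreier

open Finset

variable {R : Type*} [CommRing R] [CharP R 2]

theorem sum_range_sq_add_self_pow_two_pow (t : R) (n : ℕ) :
    ∑ i ∈ range n, (t ^ 2 + t) ^ 2 ^ i = t ^ 2 ^ n + t := by
  induction n with
  | zero => simp [CharTwo.add_self_eq_zero]
  | succ n ih =>
    rw [sum_range_succ, ih, add_pow_char_pow, ← pow_mul, ← pow_succ']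
    linear_combination t ^ 2 ^ n * CharTwo.two_eq_zero (R := R)

variable {n : ℕ} {γ : F}

theorem ne_zero_of_trace_eq_one (htr : ∑ i ∈ range n, γ ^ 2 ^ i = 1) : γ ≠ 0 := by
  rintro rfl
  simp at htr

variable [Fintype F] [CharP F 2]

theorem sq_add_self_ne_of_trace_eq_one (hn : Fintype.card F = 2 ^ n)
    (htr : ∑ i ∈ range n, γ ^ 2 ^ i = 1) (t : F) : t ^ 2 + t ≠ γ := by
  rintro rfl
  rw [sum_range_sq_add_self_pow_two_pow, ← hn, FiniteField.pow_card,
    CharTwo.add_self_eq_zero] at htr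
  exact zero_ne_one htr

theorem eq_zero_of_sq_add_mul_add_mul_sq_eq_zero (hn : Fintype.card F = 2 ^ n)
    (htr : ∑ i ∈ range n, γ ^ 2 ^ i = 1) {x y : F} (h : x ^ 2 + x * y + γ * y ^ 2 = 0) :
    x = 0 ∧ y = 0 := by
  by_cases hy : y = 0
  · subst hy
    simpa using h
  refine absurd ?_ (sq_add_self_ne_of_trace_eq_one hn htr (x / y))
  field_simp
  linear_combination h - (γ * y ^ 2) * CharTwo.two_eq_zero (R := F)

end ArtinSchreier

section QuadraticForms

def quad (a00 a11 a22 a01 a02 a12 : F) : Poly F :=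
  C a00 * X 0 ^ 2 + C a11 * X 1 ^ 2 + C a22 * X 2 ^ 2 +
    C a01 * (X 0 * X 1) + C a02 * (X 0 * X 2) + C a12 * (X 1 * X 2)

theorem X_mul_X_eq_monomial (i j : Fin 3) :
    (X i * X j : Poly F) = monomial (Finsupp.single i 1 + Finsupp.single j 1) 1 := by
  rw [X, X, monomial_mul, one_mul]

theorem qc_quad (a00 a11 a22 a01 a02 a12 : F) :
    qc (quad a00 a11 a22 a01 a02 a12) 0 0 = a00 ∧ qc (quad a00 a11 a22 a01 a02 a12) 1 1 = a11 ∧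
    qc (quad a00 a11 a22 a01 a02 a12) 2 2 = a22 ∧ qc (quad a00 a11 a22 a01 a02 a12) 0 1 = a01 ∧
    qc (quad a00 a11 a22 a01 a02 a12) 0 2 = a02 ∧ qc (quad a00 a11 a22 a01 a02 a12) 1 2 = a12 := by
  refine ⟨?_, ?_, ?_, ?_, ?_, ?_⟩ <;>
  · simp only [qc, quad, X_mul_X_eq_monomial, X_pow_eq_monomial, C_mul_monomial, coeff_add,
      coeff_monomial, Finsupp.ext_iff, Finsupp.add_apply, Finsupp.single_apply]
    simp +decide

theorem isSingular_quad (a00 a11 a22 a01 a02 a12 : F) :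
    IsSingular (quad a00 a11 a22 a01 a02 a12) ↔
      a00 * a12 ^ 2 + a11 * a02 ^ 2 + a22 * a01 ^ 2 + a01 * a02 * a12 = 0 := by
  obtain ⟨h00, h11, h22, h01, h02, h12⟩ := qc_quad a00 a11 a22 a01 a02 a12
  rw [IsSingular, h00, h11, h22, h01, h02, h12]

theorem eq_zero_of_quad_eq_zero {a00 a11 a22 a01 a02 a12 : F}
    (h : quad a00 a11 a22 a01 a02 a12 = 0) : a01 = 0 ∧ a02 = 0 := by
  obtain ⟨-, -, -, h01, h02, -⟩ := qc_quad a00 a11 a22 a01 a02 a12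
  simp only [h, qc, coeff_zero] at h01 h02
  exact ⟨h01.symm, h02.symm⟩

theorem exists_eq_of_isHomogeneous_one {ℓ : Poly F} (h : ℓ.IsHomogeneous 1) :
    ∃ a b c : F, ℓ = C a * X 0 + C b * X 1 + C c * X 2 := by
  rw [← mem_homogeneousSubmodule, homogeneousSubmodule_one_eq_span_X,
    Submodule.mem_span_range_iff_exists_fun] at h
  obtain ⟨a, rfl⟩ := h
  exact ⟨a 0, a 1, a 2, by simp [Fin.sum_univ_three, smul_eq_C_mul]⟩

theorem isSingular_mul_of_isHomogeneous_one [CharP F 2] {ℓ m : Poly F}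
    (hℓ : ℓ.IsHomogeneous 1) (hm : m.IsHomogeneous 1) : IsSingular (ℓ * m) := by
  obtain ⟨a, b, c, rfl⟩ := exists_eq_of_isHomogeneous_one hℓ
  obtain ⟨d, e, f, rfl⟩ := exists_eq_of_isHomogeneous_one hm
  have hquad : (C a * X 0 + C b * X 1 + C c * X 2) * (C d * X 0 + C e * X 1 + C f * X 2) =
      quad (a * d) (b * e) (c * f) (a * e + b * d) (a * f + c * d) (b * f + c * e) := by
    simp only [quad, C_add, C_mul]
    ring
  rw [hquad, isSingular_quad]
  linear_combination (b*c^2*d^2*e + b^2*c*d^2*f + a*c^2*d*e^2 + 4*a*b*c*d*e*f + a*b^2*d*f^2 +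
    a^2*c*e^2*f + a^2*b*e*f^2) * CharTwo.two_eq_zero (R := F)

theorem eval_eq_zero_of_dvd {ℓ g : Poly F} (hdvd : ℓ ∣ g) {v : Fin 3 → F}
    (hv : eval v ℓ = 0) : eval v g = 0 := by
  obtain ⟨m, rfl⟩ := hdvd
  rw [map_mul, hv, zero_mul]

end QuadraticForms

theorem isMember_iff {W L : Submodule F (Poly F)} :
    IsMember W L ↔ ∃ g ∈ W, g ≠ 0 ∧ L = Submodule.span F {g} := by
  constructor
  · rintro ⟨hle, hrank⟩
    have hL : L ≠ ⊥ := by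
      rintro rfl
      simp at hrank
    obtain ⟨g, hgL, hg0⟩ := Submodule.exists_mem_ne_zero_of_ne_bot hL
    exact ⟨g, hle hgL, hg0, eq_span_singleton_of_mem_of_finrank_eq_one hrank hgL hg0⟩
  · rintro ⟨g, hgW, hg0, rfl⟩
    exact ⟨(Submodule.span_singleton_le_iff_mem _ _).mpr hgW, finrank_span_singleton hg0⟩

section Pencil14

variable (γ : F)

def genF : Poly F := X 1 ^ 2 + X 0 * X 2 + C γ * X 2 ^ 2

def genS : Poly F := C γ * X 0 ^ 2 + X 0 * X 1 + X 1 ^ 2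

def pencil14 : Submodule F (Poly F) := Submodule.span F {genF γ, genS γ}

theorem smul_genF_add_smul_genS (α β : F) :
    α • genF γ + β • genS γ = quad (β * γ) (α + β) (α * γ) β α 0 := by
  simp only [genF, genS, quad, smul_eq_C_mul, C_add, C_mul, C_0]
  ring

theorem linearIndependent_genF_genS : LinearIndependent F ![genF γ, genS γ] := by
  refine LinearIndependent.pair_iff.mpr fun α β h => ?_
  rw [smul_genF_add_smul_genS] at h
  exact (eq_zero_of_quad_eq_zero h).symm

theorem genS_ne_zero : genS γ ≠ 0 := (linearIndependent_genF_genS γ).ne_zero 1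

theorem isSingular_smul_genF_add_smul_genS_iff (α β : F) :
    IsSingular (α • genF γ + β • genS γ) ↔ α * (α ^ 2 + α * β + γ * β ^ 2) = 0 := by
  rw [smul_genF_add_smul_genS, isSingular_quad]
  constructor <;> intro h <;> linear_combination h

theorem isMember_span_genS : IsMember (pencil14 γ) (Submodule.span F {genS γ}) :=
  isMember_iff.mpr ⟨genS γ, Submodule.subset_span (by simp), genS_ne_zero γ, rfl⟩

theorem span_genF_add_smul_genS_injective :
    Function.Injective fun β : F => Submodule.span F {genF γ + β • genS γ} := by
  intro β β' h
  obtain ⟨z, hz⟩ := Submodule.span_singleton_eq_span_singleton.mp h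
  rw [smul_add] at hz
  obtain ⟨hz1, hzβ⟩ := (linearIndependent_genF_genS γ).eq_of_pair (s := (z : F)) (t := z * β)
    (s' := 1) (t' := β') (by rw [one_smul, mul_smul]; exact hz)
  rw [← hzβ, hz1, one_mul]

theorem genF_add_smul_genS_ne_zero (β : F) : genF γ + β • genS γ ≠ 0 := fun h =>
  one_ne_zero (LinearIndependent.pair_iff.mp (linearIndependent_genF_genS γ) 1 β
    (by rwa [one_smul])).1

theorem isMember_span_genF_add_smul_genS (β : F) :
    IsMember (pencil14 γ) (Submodule.span F {genF γ + β • genS γ}) :=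
  isMember_iff.mpr ⟨_, Submodule.mem_span_pair.mpr ⟨1, β, by rw [one_smul]⟩,
    genF_add_smul_genS_ne_zero γ β, rfl⟩

variable {γ} [Fintype F] [CharP F 2] {n : ℕ}

theorem isSingular_smul_genF_add_smul_genS_iff_eq_zero (hn : Fintype.card F = 2 ^ n)
    (htr : ∑ i ∈ Finset.range n, γ ^ 2 ^ i = 1) (α β : F) :
    IsSingular (α • genF γ + β • genS γ) ↔ α = 0 := by
  rw [isSingular_smul_genF_add_smul_genS_iff, mul_eq_zero, or_iff_left_of_imp]
  exact fun h => (eq_zero_of_sq_add_mul_add_mul_sq_eq_zero hn htr h).1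

theorem not_hasLinearFactor_genS (hn : Fintype.card F = 2 ^ n)
    (htr : ∑ i ∈ Finset.range n, γ ^ 2 ^ i = 1) : ¬ HasLinearFactor (genS γ) := by
  rintro ⟨ℓ, hℓ, -, hdvd⟩
  obtain ⟨a, b, c, rfl⟩ := exists_eq_of_isHomogeneous_one hℓ
  -- in characteristic 2 the linear form `a·X0 + b·X1 + c·X2` vanishes at `(b, a, 0)`
  have hba := eval_eq_zero_of_dvd hdvd (v := ![b, a, 0]) (by
    simpa [mul_comm] using CharTwo.add_self_eq_zero (a * b))
  simp only [genS, map_add, map_mul, map_pow, eval_C, eval_X, Matrix.cons_val] at hba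
  obtain ⟨rfl, rfl⟩ := eq_zero_of_sq_add_mul_add_mul_sq_eq_zero hn htr (x := a) (y := b)
    (by linear_combination hba)
  have h100 := eval_eq_zero_of_dvd hdvd (v := ![1, 0, 0]) (by simp)
  simp [genS] at h100
  exact ne_zero_of_trace_eq_one htr h100

theorem isImagPair_span_genS (hn : Fintype.card F = 2 ^ n)
    (htr : ∑ i ∈ Finset.range n, γ ^ 2 ^ i = 1) :
    IsImagPair (Submodule.span F {genS γ}) := by
  intro g hg hg0
  obtain ⟨c, rfl⟩ := Submodule.mem_span_singleton.mp hg
  have hc : c ≠ 0 := by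
    rintro rfl
    simp at hg0
  refine ⟨by simpa using (isSingular_smul_genF_add_smul_genS_iff_eq_zero hn htr 0 c).mpr rfl,
    ?_⟩
  rintro ⟨ℓ, hℓ, hℓ0, hdvd⟩
  refine not_hasLinearFactor_genS hn htr ⟨ℓ, hℓ, hℓ0, ?_⟩
  simpa [← smul_eq_C_mul, smul_smul, mul_inv_cancel₀ hc] using hdvd.mul_left (C c⁻¹)

theorem not_isNonsingularConic_iff_eq_span_genS (hn : Fintype.card F = 2 ^ n)
    (htr : ∑ i ∈ Finset.range n, γ ^ 2 ^ i = 1) {L : Submodule F (Poly F)}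
    (hL : IsMember (pencil14 γ) L) :
    ¬ IsNonsingularConic L ↔ L = Submodule.span F {genS γ} := by
  refine ⟨fun hns => ?_, ?_⟩
  · by_contra hne
    refine hns fun g hgL hg0 hsing => hne ?_
    obtain ⟨α, β, rfl⟩ := Submodule.mem_span_pair.mp (hL.1 hgL)
    obtain rfl := (isSingular_smul_genF_add_smul_genS_iff_eq_zero hn htr α β).mp hsing
    rw [zero_smul, zero_add] at hgL hg0
    have hβ : β ≠ 0 := by
      rintro rfl
      simp at hg0
    rw [eq_span_singleton_of_mem_of_finrank_eq_one hL.2 hgL hg0,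
      Submodule.span_singleton_smul_eq (IsUnit.mk0 β hβ)]
  · rintro rfl hns
    exact hns _ (Submodule.mem_span_singleton_self _) (genS_ne_zero γ)
      (isImagPair_span_genS hn htr _ (Submodule.mem_span_singleton_self _) (genS_ne_zero γ)).1

theorem mul_eq_zero_of_isMember_of_mul_mem (hn : Fintype.card F = 2 ^ n)
    (htr : ∑ i ∈ Finset.range n, γ ^ 2 ^ i = 1) {L : Submodule F (Poly F)}
    (hL : IsMember (pencil14 γ) L) {ℓ m : Poly F} (hℓ : ℓ.IsHomogeneous 1)
    (hm : m.IsHomogeneous 1) (hmem : ℓ * m ∈ L) : ℓ * m = 0 := by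
  by_contra h0
  obtain rfl := (not_isNonsingularConic_iff_eq_span_genS hn htr hL).mp fun hns =>
    hns _ hmem h0 (isSingular_mul_of_isHomogeneous_one hℓ hm)
  exact (isImagPair_span_genS hn htr _ hmem h0).2
    ⟨ℓ, hℓ, left_ne_zero_of_mul h0, dvd_mul_right ℓ m⟩

theorem a1_pencil14 (hn : Fintype.card F = 2 ^ n)
    (htr : ∑ i ∈ Finset.range n, γ ^ 2 ^ i = 1) :
    a1 (pencil14 γ) = 0 := by
  refine Nat.card_eq_zero.mpr (Or.inl ⟨fun ⟨L, hL, hdouble⟩ => ?_⟩)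
  obtain ⟨g, -, hg0, rfl⟩ := isMember_iff.mp hL
  obtain ⟨ℓ, hℓ, -, rfl⟩ := hdouble g (Submodule.mem_span_singleton_self g) hg0
  rw [sq] at hL hg0
  exact hg0 (mul_eq_zero_of_isMember_of_mul_mem hn htr hL hℓ hℓ
    (Submodule.mem_span_singleton_self _))

theorem a2r_pencil14 (hn : Fintype.card F = 2 ^ n)
    (htr : ∑ i ∈ Finset.range n, γ ^ 2 ^ i = 1) :
    a2r (pencil14 γ) = 0 := by
  refine Nat.card_eq_zero.mpr (Or.inl ⟨fun ⟨L, hL, hpair⟩ => ?_⟩)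
  obtain ⟨g, -, hg0, rfl⟩ := isMember_iff.mp hL
  obtain ⟨ℓ, m, hℓ, hm, -, rfl⟩ := hpair g (Submodule.mem_span_singleton_self g) hg0
  exact hg0 (mul_eq_zero_of_isMember_of_mul_mem hn htr hL hℓ hm
    (Submodule.mem_span_singleton_self _))

theorem a2i_pencil14 (hn : Fintype.card F = 2 ^ n)
    (htr : ∑ i ∈ Finset.range n, γ ^ 2 ^ i = 1) :
    a2i (pencil14 γ) = 1 := by
  refine Nat.card_eq_one_iff_exists.mpr
    ⟨⟨_, isMember_span_genS γ, isImagPair_span_genS hn htr⟩, fun ⟨L, hL, himag⟩ => ?_⟩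
  obtain ⟨g, -, hg0, rfl⟩ := isMember_iff.mp hL
  refine Subtype.ext ((not_isNonsingularConic_iff_eq_span_genS hn htr hL).mp fun hns => ?_)
  exact hns g (Submodule.mem_span_singleton_self g) hg0
    (himag g (Submodule.mem_span_singleton_self g) hg0).1

theorem isNonsingularConic_span_genF_add_smul_genS (hn : Fintype.card F = 2 ^ n)
    (htr : ∑ i ∈ Finset.range n, γ ^ 2 ^ i = 1) (β : F) :
    IsNonsingularConic (Submodule.span F {genF γ + β • genS γ}) := by
  intro g hg hg0
  obtain ⟨c, rfl⟩ := Submodule.mem_span_singleton.mp hg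
  rw [smul_add, smul_smul, isSingular_smul_genF_add_smul_genS_iff_eq_zero hn htr]
  rintro rfl
  exact hg0 (zero_smul F _)

theorem a3_pencil14 (hn : Fintype.card F = 2 ^ n)
    (htr : ∑ i ∈ Finset.range n, γ ^ 2 ^ i = 1) :
    a3 (pencil14 γ) = Fintype.card F := by
  rw [a3, ← Nat.card_eq_fintype_card]
  refine (Nat.card_eq_of_bijective (fun β => ⟨_, isMember_span_genF_add_smul_genS γ β,
    isNonsingularConic_span_genF_add_smul_genS hn htr β⟩) ⟨fun β β' h =>
      span_genF_add_smul_genS_injective γ (congrArg Subtype.val h), ?_⟩).symm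
  rintro ⟨L, hL, hns⟩
  obtain ⟨g, hgW, hg0, rfl⟩ := isMember_iff.mp hL
  obtain ⟨α, β, rfl⟩ := Submodule.mem_span_pair.mp hgW
  have hα : α ≠ 0 := fun h => hns _ (Submodule.mem_span_singleton_self _) hg0
    ((isSingular_smul_genF_add_smul_genS_iff_eq_zero hn htr α β).mpr h)
  refine ⟨α⁻¹ * β, Subtype.ext ?_⟩
  dsimp only
  rw [← Submodule.span_singleton_smul_eq (IsUnit.mk0 α hα), smul_add, smul_smul,
    mul_inv_cancel_left₀ hα]

theorem eq_zero_of_eval_genF_eq_zero_of_eval_genS_eq_zero (hn : Fintype.card F = 2 ^ n)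
    (htr : ∑ i ∈ Finset.range n, γ ^ 2 ^ i = 1) {v : Fin 3 → F} (hF : eval v (genF γ) = 0)
    (hS : eval v (genS γ) = 0) : v = 0 := by
  simp only [genF, genS, map_add, map_mul, map_pow, eval_C, eval_X] at hF hS
  obtain ⟨h1, h0⟩ := eq_zero_of_sq_add_mul_add_mul_sq_eq_zero hn htr (x := v 1) (y := v 0)
    (by linear_combination hS)
  rw [h0, h1] at hF
  have h2 : v 2 = 0 := by simpa [ne_zero_of_trace_eq_one htr] using hF
  ext i
  fin_cases i <;> assumption

theorem b_pencil14 (hn : Fintype.card F = 2 ^ n)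
    (htr : ∑ i ∈ Finset.range n, γ ^ 2 ^ i = 1) :
    b (pencil14 γ) = 0 := by
  refine Nat.card_eq_zero.mpr (Or.inl ⟨fun ⟨P, hrank, hvanish⟩ => ?_⟩)
  have hP : P ≠ ⊥ := by
    rintro rfl
    simp at hrank
  obtain ⟨v, hv, hv0⟩ := Submodule.exists_mem_ne_zero_of_ne_bot hP
  exact hv0 (eq_zero_of_eval_genF_eq_zero_of_eval_genS_eq_zero hn htr
    (hvanish _ (Submodule.subset_span (by simp)) v hv)
    (hvanish _ (Submodule.subset_span (by simp)) v hv))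

end Pencil14

/-- for `γ` with `Tr(γ) = 1`, the pencil
`W14 = ⟨X1² + X0·X2 + γ·X2², γ·X0² + X0·X1 + X1²⟩` has exactly one singular member, namely
the one spanned by `γ·X0² + X0·X1 + X1²`, which is an imaginary line pair; the other `q`
members are nonsingular; and `W14` has no base points. -/
theorem omega14_pencil (F : Type*) [Field F] [Fintype F] [CharP F 2]
    (n : ℕ) (hn : Fintype.card F = 2 ^ n) (γ : F)
    (htr : ∑ i ∈ Finset.range n, γ ^ 2 ^ i = 1) :
    let q := Fintype.card F
    let s : Poly F := C γ * X 0 ^ 2 + X 0 * X 1 + X 1 ^ 2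
    let W14 : Submodule F (Poly F) :=
      Submodule.span F {X 1 ^ 2 + X 0 * X 2 + C γ * X 2 ^ 2, s}
    (∀ L, IsMember W14 L → (¬ IsNonsingularConic L ↔ L = Submodule.span F {s})) ∧
    IsImagPair (Submodule.span F {s}) ∧
    (a1 W14, a2r W14, a2i W14, a3 W14) = (0, 0, 1, q) ∧
    b W14 = 0 := by
  intro q s W14
  have hW14 : W14 = pencil14 γ := rfl
  rw [hW14, a1_pencil14 hn htr, a2r_pencil14 hn htr, a2i_pencil14 hn htr, a3_pencil14 hn htr,
    b_pencil14 hn htr]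
  exact ⟨fun L => not_isNonsingularConic_iff_eq_span_genS hn htr, isImagPair_span_genS hn htr,
    rfl, rfl⟩

end Pencils
end
end
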